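/- arXiv:2510.21058 — 8 statements merged into one kernel-verified Lean document; each statement's English description precedes it below -/
import Mathlib

section
/- Fix an r-Hypergraph Label Cover instance and vectors v_j^c (j ∈ [r], c ∈ C) with the (r, ·, 2)-vector-system properties. For an assignment σ and a hyperedge h, let S_h(σ) = Σ_{j=1}^r v_j^{π_h^{u_j(h)}(σ(u_j(h)))} ∈ ℝ^{d_0}. Then: (1) if σ satisfies every hyperedge of the instance, then (1/|𝓔|) Σ_{h∈𝓔} ‖S_h(σ)‖₂² = 1; and (2) if ε ≥ 0 and every assignment weakly satisfies at most ε|𝓔| hyperedges, then every assignment σ satisfies (1/|𝓔|) Σ_{h∈𝓔} ‖S_h(σ)‖₂² ≥ 2 − 1/r − 2ε. -/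
open Finset

/-- An instance of `r`-Hypergraph Label Cover: an `r`-partite hypergraph with vertex set `V`
(partitioned into `r` classes by `part`), label set `L`, color set `C`, and hyperedge set `E`;
a hyperedge `h` consists of one vertex `u h j` from the `j`-th class for each `j ∈ [r]`,
together with a map `pi h j : L → C` (the map `π_h^{u_j(h)}`). -/
structure LabelCover (r : ℕ) (V L C E : Type*) where
  /-- the `j`-th vertex of hyperedge `h` -/
  u : E → Fin r → V
  /-- the map `π_h^{u_j(h)} : L → C` -/
  pi : E → Fin r → L → C
  /-- the partition class of a vertex -/
  part : V → Fin r
  /-- the `j`-th vertex of every hyperedge lies in the `j`-th class -/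
  hpart : ∀ h j, part (u h j) = j

variable {r : ℕ} {V L C E : Type*}

/-- An assignment `σ` satisfies a hyperedge `h` if all the colors
`π_h^{u_j(h)}(σ(u_j(h)))`, `j ∈ [r]`, coincide. -/
def LabelCover.Satisfies (I : LabelCover r V L C E) (σ : V → L) (h : E) : Prop :=
  ∀ j j' : Fin r, I.pi h j (σ (I.u h j)) = I.pi h j' (σ (I.u h j'))

/-- An assignment `σ` weakly satisfies a hyperedge `h` if two of the colors at distinct
indices coincide. -/
def LabelCover.WeaklySatisfies (I : LabelCover r V L C E) (σ : V → L) (h : E) : Prop :=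
  ∃ j j' : Fin r, j ≠ j' ∧ I.pi h j (σ (I.u h j)) = I.pi h j' (σ (I.u h j'))

/-- Fix an `r`-Hypergraph Label Cover instance and vectors `v j c`
with the `(r, ·, 2)`-vector-system properties, and let
`S_h(σ) = Σ_{j=1}^r v_j^{π_h^{u_j(h)}(σ(u_j(h)))}`.
(1) If `σ` satisfies every hyperedge, then the average over `h ∈ 𝓔` of `‖S_h(σ)‖₂²` is `1`.
(2) If every assignment weakly satisfies at most `ε|𝓔|` hyperedges, then for every `σ`
this average is at least `2 - 1/r - 2ε`. -/
theorem basic_reduction_l2 {d0 : ℕ} [Fintype E] [Nonempty E]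
    (hr : 2 ≤ r) (I : LabelCover r V L C E)
    (v : Fin r → C → Fin d0 → ℝ)
    (hnorm : ∀ (j : Fin r) (c : C), ∑ w, v j c w ^ 2 = 1 / r)
    (horth : ∀ (c : C) (j j' : Fin r), j ≠ j' → ∑ w, v j c w * v j' c w = 0)
    (hcross : ∀ (j j' : Fin r) (c c' : C), c ≠ c' →
      ∑ w, v j c w * v j' c' w = 1 / (r : ℝ) ^ 2) :
    (∀ σ : V → L, (∀ h : E, I.Satisfies σ h) →
      (1 / (Fintype.card E : ℝ)) * ∑ h : E, ∑ w,
        (∑ j : Fin r, v j (I.pi h j (σ (I.u h j))) w) ^ 2 = 1) ∧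
    (∀ ε : ℝ, 0 ≤ ε →
      (∀ σ : V → L,
        (Nat.card {h : E // I.WeaklySatisfies σ h} : ℝ) ≤ ε * Fintype.card E) →
      ∀ σ : V → L,
        (1 / (Fintype.card E : ℝ)) * ∑ h : E, ∑ w,
          (∑ j : Fin r, v j (I.pi h j (σ (I.u h j))) w) ^ 2 ≥ 2 - 1 / r - 2 * ε) := by
  classical
  have hrR : (2:ℝ) ≤ (r:ℝ) := by exact_mod_cast hr
  have hr0 : (r:ℝ) ≠ 0 := by linarith
  -- expansion of the square norm
  have expand : ∀ (c : Fin r → C),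
      ∑ w, (∑ j : Fin r, v j (c j) w) ^ 2
        = ∑ j : Fin r, ∑ j' : Fin r, ∑ w, v j (c j) w * v j' (c j') w := by
    intro c
    simp_rw [sq, Finset.sum_mul_sum]
    rw [Finset.sum_comm]
    exact Finset.sum_congr rfl fun j _ => Finset.sum_comm
  -- value when satisfied
  have val_sat : ∀ (c : Fin r → C), (∀ j j', c j = c j') →
      ∑ j : Fin r, ∑ j' : Fin r, ∑ w, v j (c j) w * v j' (c j') w = 1 := by
    intro c hc
    have : ∀ j : Fin r, ∑ j' : Fin r, ∑ w, v j (c j) w * v j' (c j') w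
        = (1 / r : ℝ) := by
      intro j
      rw [Finset.sum_eq_single j]
      · rw [show (∑ w, v j (c j) w * v j (c j) w) = ∑ w, v j (c j) w ^ 2 by
          exact Finset.sum_congr rfl fun w _ => (sq (v j (c j) w)).symm]
        exact hnorm j (c j)
      · intro j' _ hj'
        rw [hc j j']
        exact horth (c j') j j' (Ne.symm hj')
      · intro habs; exact absurd (Finset.mem_univ j) habs
    rw [Finset.sum_congr rfl fun j _ => this j, Finset.sum_const, Finset.card_univ,
      Fintype.card_fin, nsmul_eq_mul]
    field_simp
  -- value when not weakly satisfied
  have val_nws : ∀ (c : Fin r → C), (∀ j j', j ≠ j' → c j ≠ c j') →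
      ∑ j : Fin r, ∑ j' : Fin r, ∑ w, v j (c j) w * v j' (c j') w
        = 2 - 1 / r := by
    intro c hc
    have hinner : ∀ j : Fin r, ∑ j' : Fin r, ∑ w, v j (c j) w * v j' (c j') w
        = ∑ j' : Fin r, (if j = j' then (1/r : ℝ) else 1/(r:ℝ)^2) := by
      intro j
      refine Finset.sum_congr rfl fun j' _ => ?_
      by_cases hjj : j = j'
      · subst hjj; simp only [if_pos rfl]
        rw [show (∑ w, v j (c j) w * v j (c j) w) = ∑ w, v j (c j) w ^ 2 by
          exact Finset.sum_congr rfl fun w _ => (sq (v j (c j) w)).symm]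
        exact hnorm j (c j)
      · rw [if_neg hjj]
        exact hcross j j' (c j) (c j') (hc j j' hjj)
    have hrow : ∀ j : Fin r, ∑ j' : Fin r, (if j = j' then (1/r : ℝ) else 1/(r:ℝ)^2)
        = 1/(r:ℝ) + ((r:ℝ) - 1) * (1/(r:ℝ)^2) := by
      intro j
      have : ∀ j' : Fin r, (if j = j' then (1/r : ℝ) else 1/(r:ℝ)^2)
          = 1/(r:ℝ)^2 + (if j = j' then (1/(r:ℝ) - 1/(r:ℝ)^2) else 0) := by
        intro j'; split_ifs <;> ring
      rw [Finset.sum_congr rfl fun j' _ => this j', Finset.sum_add_distrib,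
        Finset.sum_const, Finset.sum_ite_eq, if_pos (Finset.mem_univ j),
        Finset.card_univ, Fintype.card_fin, nsmul_eq_mul]
      ring
    rw [Finset.sum_congr rfl fun j _ => (hinner j).trans (hrow j),
      Finset.sum_const, Finset.card_univ, Fintype.card_fin, nsmul_eq_mul]
    field_simp
    ring
  constructor
  · intro σ hσ
    have : ∀ h : E, ∑ w, (∑ j : Fin r, v j (I.pi h j (σ (I.u h j))) w) ^ 2 = 1 := by
      intro h
      rw [expand]
      exact val_sat _ (hσ h)
    rw [Finset.sum_congr rfl fun h _ => this h, Finset.sum_const, Finset.card_univ,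
      nsmul_eq_mul, mul_one]
    have hN : (Fintype.card E : ℝ) ≠ 0 := by
      exact_mod_cast Fintype.card_ne_zero
    field_simp
  · intro ε hε hweak σ
    set A : E → ℝ := fun h => ∑ w, (∑ j : Fin r, v j (I.pi h j (σ (I.u h j))) w) ^ 2
      with hA
    have hApos : ∀ h, 0 ≤ A h := fun h => Finset.sum_nonneg fun w _ => sq_nonneg _
    set S : Finset E := Finset.univ.filter (fun h => I.WeaklySatisfies σ h) with hS
    have hAval : ∀ h ∈ Sᶜ, A h = 2 - 1/r := by
      intro h hh
      have hnw : ¬ I.WeaklySatisfies σ h := by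
        simp only [hS, Finset.mem_compl, Finset.mem_filter, Finset.mem_univ,
          true_and] at hh
        exact hh
      exact (expand _).trans (val_nws _ fun j j' hjj hceq => hnw ⟨j, j', hjj, hceq⟩)
    have hcard : (Nat.card {h : E // I.WeaklySatisfies σ h} : ℝ) = S.card := by
      rw [Nat.card_eq_fintype_card, Fintype.card_subtype]
    have hk : (S.card : ℝ) ≤ ε * Fintype.card E := by
      rw [← hcard]; exact hweak σ
    have hsum : ∑ h ∈ Sᶜ, A h ≤ ∑ h : E, A h := by
      exact Finset.sum_le_sum_of_subset_of_nonneg (Finset.subset_univ _)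
        (fun h _ _ => hApos h)
    have hcompl : ∑ h ∈ Sᶜ, A h = ((Fintype.card E : ℝ) - S.card) * (2 - 1/r) := by
      rw [Finset.sum_congr rfl hAval, Finset.sum_const, nsmul_eq_mul,
        Finset.card_compl]
      have hle : S.card ≤ Fintype.card E := Finset.card_le_univ S
      push_cast [hle]
      ring
    have hN : (0:ℝ) < Fintype.card E := by
      exact_mod_cast Fintype.card_pos
    have h1r : 1/(r:ℝ) ≤ 1/2 := by
      apply one_div_le_one_div_of_le <;> linarith
    have key : ∑ h : E, A h ≥ ((Fintype.card E : ℝ) - ε * Fintype.card E) * (2 - 1/r) := by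
      refine le_trans ?_ (hcompl ▸ hsum)
      have h2 : (0:ℝ) ≤ 2 - 1/r := by linarith
      nlinarith [hk]
    rw [ge_iff_le, ← sub_nonneg]
    have expand2 : (1 / (Fintype.card E : ℝ)) * ∑ h : E, A h - (2 - 1/r - 2*ε)
        ≥ (1 / (Fintype.card E : ℝ)) * (((Fintype.card E : ℝ) - ε * Fintype.card E) * (2 - 1/r)) - (2 - 1/r - 2*ε) := by
      have : (0:ℝ) ≤ 1 / (Fintype.card E : ℝ) := by positivity
      nlinarith [key]
    refine le_trans ?_ expand2
    have hNe : (Fintype.card E : ℝ) ≠ 0 := ne_of_gt hN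
    have : (1 / (Fintype.card E : ℝ)) * (((Fintype.card E : ℝ) - ε * Fintype.card E) * (2 - 1/r))
        = (1 - ε) * (2 - 1/r) := by field_simp
    rw [this]
    have hrpos : (0:ℝ) < r := by linarith
    nlinarith [mul_nonneg hε (one_div_nonneg.mpr hrpos.le), h1r]
end

section
/- Fix an r-Hypergraph Label Cover instance and vectors v_j^c (j ∈ [r], c ∈ C) with the (r, ·, 2)-vector-system properties, and for an assignment σ and hyperedge h let S_h(σ) = Σ_{j=1}^r v_j^{π_h^{u_j(h)}(σ(u_j(h)))}. If ε ≥ 0 and every assignment weakly satisfies at most ε|𝓔| hyperedges, then for every two assignments σ₁ and σ₂, (1/|𝓔|) Σ_{h∈𝓔} ⟨S_h(σ₁), S_h(σ₂)⟩ ≥ 1 − 4ε. -/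
open Finset

variable {r : ℕ} {V L C E : Type*}

/-!
Expanding `⟨S_h(σ₁), S_h(σ₂)⟩` bilinearly gives `r²` pairs `⟨v_j^{c}, v_{j'}^{c'}⟩`; every such
term is at least `1/r²`, except for the collisions `j ≠ j'`, `c = c'`, which contribute `0`.
A collision at the pair `(j, j')` makes the hyperedge weakly satisfied by the assignment that
agrees with `σ₁` on the `j`-th class and with `σ₂` elsewhere, so each of the `r²` pairs collides
on at most `ε|𝓔|` hyperedges. Hence the average inner product is at least `1 - ε`.
-/

/-- The `(r, ·, 2)`-vector-system properties. -/
structure IsVectorSystem {d : ℕ} (v : Fin r → C → Fin d → ℝ) : Prop where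
  dotProduct_self : ∀ j c, v j c ⬝ᵥ v j c = 1 / r
  dotProduct_of_ne_index : ∀ c j j', j ≠ j' → v j c ⬝ᵥ v j' c = 0
  dotProduct_of_ne_color : ∀ j j' c c', c ≠ c' → v j c ⬝ᵥ v j' c' = 1 / (r : ℝ) ^ 2

open Classical in
noncomputable def collisions (a b : Fin r → C) : Finset (Fin r × Fin r) :=
  {p | p.1 ≠ p.2 ∧ a p.1 = b p.2}

theorem mem_collisions {a b : Fin r → C} {p : Fin r × Fin r} :
    p ∈ collisions a b ↔ p.1 ≠ p.2 ∧ a p.1 = b p.2 := by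
  simp [collisions]

namespace IsVectorSystem

variable {d : ℕ} {v : Fin r → C → Fin d → ℝ}

theorem inv_sq_le_dotProduct (hv : IsVectorSystem v) {a b : Fin r → C}
    {p : Fin r × Fin r} (hp : p ∉ collisions a b) :
    1 / (r : ℝ) ^ 2 ≤ v p.1 (a p.1) ⬝ᵥ v p.2 (b p.2) := by
  obtain ⟨j, j'⟩ := p
  by_cases hc : a j = b j'
  · have hj : j = j' := by simpa [mem_collisions, hc] using hp
    subst hj
    have hr : (1 : ℝ) ≤ r := by exact_mod_cast j.pos
    rw [hc, hv.dotProduct_self]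
    gcongr
    nlinarith
  · exact (hv.dotProduct_of_ne_color j j' _ _ hc).ge

theorem one_sub_card_collisions_le (hv : IsVectorSystem v) (hr : 1 ≤ r) (a b : Fin r → C) :
    1 - #(collisions a b) / (r : ℝ) ^ 2 ≤ (∑ j, v j (a j)) ⬝ᵥ (∑ j, v j (b j)) := by
  have hr0 : (r : ℝ) ≠ 0 := by positivity
  have hsum : (∑ p : Fin r × Fin r, if p ∈ collisions a b then 0 else 1 / (r : ℝ) ^ 2)
      = 1 - #(collisions a b) / (r : ℝ) ^ 2 := by
    rw [Finset.sum_ite, Finset.sum_const_zero, zero_add, Finset.sum_const, Finset.filter_not,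
      Finset.filter_mem_eq_inter, Finset.univ_inter, Finset.card_sdiff_of_subset (subset_univ _)]
    have hcard : #(collisions a b) ≤ r * r := by simpa using card_le_univ (collisions a b)
    rw [card_univ, Fintype.card_prod, Fintype.card_fin, nsmul_eq_mul, Nat.cast_sub hcard]
    push_cast
    field_simp
  rw [← hsum, sum_dotProduct]
  simp only [dotProduct_sum]
  rw [← Fintype.sum_prod_type']
  refine Finset.sum_le_sum fun p _ => ?_
  split_ifs with hp
  · rw [mem_collisions] at hp
    rw [← hp.2]
    exact (hv.dotProduct_of_ne_index _ _ _ hp.1).ge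
  · exact hv.inv_sq_le_dotProduct hp

end IsVectorSystem

namespace LabelCover

def colors (I : LabelCover r V L C E) (σ : V → L) (h : E) : Fin r → C :=
  fun j => I.pi h j (σ (I.u h j))

def mixAssignment (I : LabelCover r V L C E) (j : Fin r) (σ₁ σ₂ : V → L) : V → L :=
  fun x => if I.part x = j then σ₁ x else σ₂ x

theorem weaklySatisfies_mixAssignment (I : LabelCover r V L C E) {σ₁ σ₂ : V → L} {h : E}
    {j j' : Fin r} (hj : j ≠ j') (heq : I.colors σ₁ h j = I.colors σ₂ h j') :
    I.WeaklySatisfies (I.mixAssignment j σ₁ σ₂) h := by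
  refine ⟨j, j', hj, ?_⟩
  simpa [mixAssignment, colors, I.hpart, hj.symm] using heq

open Classical in
theorem card_colors_eq_le [Fintype E] (I : LabelCover r V L C E) {ε : ℝ}
    (hno : ∀ σ : V → L,
      (Nat.card {h : E // I.WeaklySatisfies σ h} : ℝ) ≤ ε * Fintype.card E)
    (σ₁ σ₂ : V → L) {j j' : Fin r} (hj : j ≠ j') :
    (#{h | I.colors σ₁ h j = I.colors σ₂ h j'} : ℝ) ≤ ε * Fintype.card E := by
  refine le_trans ?_ (hno (I.mixAssignment j σ₁ σ₂))
  rw [Nat.card_eq_fintype_card, Fintype.card_subtype]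
  exact_mod_cast card_le_card fun h hh => by
    simpa using I.weaklySatisfies_mixAssignment hj (by simpa using hh)

theorem sum_card_collisions_le [Fintype E] (I : LabelCover r V L C E) {ε : ℝ} (hε : 0 ≤ ε)
    (hno : ∀ σ : V → L,
      (Nat.card {h : E // I.WeaklySatisfies σ h} : ℝ) ≤ ε * Fintype.card E)
    (σ₁ σ₂ : V → L) :
    ∑ h, (#(collisions (I.colors σ₁ h) (I.colors σ₂ h)) : ℝ)
      ≤ r ^ 2 * (ε * Fintype.card E) := by
  classical
  have hswap : ∑ h, #(collisions (I.colors σ₁ h) (I.colors σ₂ h))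
      = ∑ p : Fin r × Fin r, #{h | p ∈ collisions (I.colors σ₁ h) (I.colors σ₂ h)} := by
    simpa [bipartiteAbove, bipartiteBelow] using
      sum_card_bipartiteAbove_eq_sum_card_bipartiteBelow (s := univ) (t := univ)
        (r := fun h (p : Fin r × Fin r) => p ∈ collisions (I.colors σ₁ h) (I.colors σ₂ h))
  have hpair (p : Fin r × Fin r) :
      (#{h | p ∈ collisions (I.colors σ₁ h) (I.colors σ₂ h)} : ℝ) ≤ ε * Fintype.card E := by
    obtain ⟨j, j'⟩ := p
    by_cases hj : j = j'
    · simp only [hj, mem_collisions, ne_eq, not_true_eq_false, false_and, filter_false,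
        card_empty, CharP.cast_eq_zero]
      positivity
    · refine le_trans ?_ (I.card_colors_eq_le hno σ₁ σ₂ hj)
      exact_mod_cast card_le_card fun h hh => by simp_all [mem_collisions]
  calc ∑ h, (#(collisions (I.colors σ₁ h) (I.colors σ₂ h)) : ℝ)
      = ∑ p : Fin r × Fin r, (#{h | p ∈ collisions (I.colors σ₁ h) (I.colors σ₂ h)} : ℝ) := by
        exact_mod_cast hswap
    _ ≤ ∑ _p : Fin r × Fin r, ε * Fintype.card E := sum_le_sum fun p _ => hpair p
    _ = r ^ 2 * (ε * Fintype.card E) := by simp [sq]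

end LabelCover

/-- Fix an `r`-Hypergraph Label Cover instance and vectors `v j c`
with the `(r, ·, 2)`-vector-system properties, and let
`S_h(σ) = Σ_{j=1}^r v_j^{π_h^{u_j(h)}(σ(u_j(h)))}`. If `ε ≥ 0` and every assignment
weakly satisfies at most `ε|𝓔|` hyperedges, then for all assignments `σ₁, σ₂`,
`(1/|𝓔|) Σ_h ⟨S_h(σ₁), S_h(σ₂)⟩ ≥ 1 − 4ε`. -/
theorem basic_reduction_l2_inner {d0 : ℕ} [Fintype E] [Nonempty E]
    (hr : 2 ≤ r) (I : LabelCover r V L C E)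
    (v : Fin r → C → Fin d0 → ℝ)
    (hnorm : ∀ (j : Fin r) (c : C), ∑ w, v j c w ^ 2 = 1 / r)
    (horth : ∀ (c : C) (j j' : Fin r), j ≠ j' → ∑ w, v j c w * v j' c w = 0)
    (hcross : ∀ (j j' : Fin r) (c c' : C), c ≠ c' →
      ∑ w, v j c w * v j' c' w = 1 / (r : ℝ) ^ 2)
    (ε : ℝ) (hε : 0 ≤ ε)
    (hno : ∀ σ : V → L,
      (Nat.card {h : E // I.WeaklySatisfies σ h} : ℝ) ≤ ε * Fintype.card E) :
    ∀ σ₁ σ₂ : V → L,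
      (1 / (Fintype.card E : ℝ)) * ∑ h : E, ∑ w,
        (∑ j : Fin r, v j (I.pi h j (σ₁ (I.u h j))) w) *
        (∑ j : Fin r, v j (I.pi h j (σ₂ (I.u h j))) w) ≥ 1 - 4 * ε := by
  intro σ₁ σ₂
  have hv : IsVectorSystem v :=
    ⟨fun j c => by simpa [dotProduct, sq] using hnorm j c, horth, hcross⟩
  have hedge (h : E) : 1 - #(collisions (I.colors σ₁ h) (I.colors σ₂ h)) / (r : ℝ) ^ 2 ≤
      ∑ w, (∑ j : Fin r, v j (I.pi h j (σ₁ (I.u h j))) w) *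
        (∑ j : Fin r, v j (I.pi h j (σ₂ (I.u h j))) w) := by
    simpa [dotProduct, Finset.sum_apply, LabelCover.colors] using
      hv.one_sub_card_collisions_le (by omega) (I.colors σ₁ h) (I.colors σ₂ h)
  have htotal := I.sum_card_collisions_le hε hno σ₁ σ₂
  have hn : (0 : ℝ) < Fintype.card E := by exact_mod_cast Fintype.card_pos
  have hr2 : (0 : ℝ) < (r : ℝ) ^ 2 := pow_pos (by exact_mod_cast (by omega : 0 < r)) 2
  have havg : (Fintype.card E : ℝ) * (1 - ε) ≤
      ∑ h, (1 - #(collisions (I.colors σ₁ h) (I.colors σ₂ h)) / (r : ℝ) ^ 2) := by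
    have hS : (∑ h, (#(collisions (I.colors σ₁ h) (I.colors σ₂ h)) : ℝ)) / (r : ℝ) ^ 2
        ≤ ε * Fintype.card E := by
      rw [div_le_iff₀ hr2]
      linarith
    rw [sum_sub_distrib, ← sum_div, sum_const, card_univ, nsmul_eq_mul, mul_one]
    linarith
  calc 1 - 4 * ε ≤ (1 / (Fintype.card E : ℝ)) * ((Fintype.card E : ℝ) * (1 - ε)) := by
        field_simp
        linarith
    _ ≤ _ := by gcongr; exact havg.trans (sum_le_sum fun h _ => hedge h)
end

section
/- Fix an r-Hypergraph Label Cover instance and ε ≥ 0 such that every assignment weakly satisfies at most ε|𝓔| hyperedges. Then for every integer p ≥ 1 and all assignments σ_1, …, σ_p, the number of hyperedges h ∈ 𝓔 that are colorful with respect to σ_1, …, σ_p is at least (1 − p²ε)|𝓔|. -/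
open Finset

variable {r : ℕ} {V L C E : Type*}

/-- A hyperedge `h` is colorful with respect to assignments `σ_1, …, σ_p` if
`π_h^{u_j(h)}(σ_i(u_j(h))) ≠ π_h^{u_{j'}(h)}(σ_{i'}(u_{j'}(h)))` for all `i, i' ∈ [p]`
and all `j ≠ j'`. -/
def LabelCover.Colorful (I : LabelCover r V L C E) {p : ℕ}
    (σ : Fin p → V → L) (h : E) : Prop :=
  ∀ (i i' : Fin p) (j j' : Fin r), j ≠ j' →
    I.pi h j (σ i (I.u h j)) ≠ I.pi h j' (σ i' (I.u h j'))

/-- Counting functions with two prescribed values. -/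
lemma card_fix_two {α β : Type*} [Fintype α] [DecidableEq α] [Fintype β] [DecidableEq β]
    {a b : α} (hab : a ≠ b) (i i' : β) :
    (Finset.univ.filter fun c : α → β => c a = i ∧ c b = i').card
      = Fintype.card β ^ (Fintype.card α - 2) := by
  have e : {c : α → β // c a = i ∧ c b = i'} ≃ ({x : α // x ≠ a ∧ x ≠ b} → β) :=
    { toFun := fun c x => c.1 x.1
      invFun := fun f => ⟨fun x => if hxa : x = a then i else if hxb : x = b then i'
          else f ⟨x, hxa, hxb⟩, by simp [hab.symm]⟩
      left_inv := by
        rintro ⟨c, hc1, hc2⟩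
        ext x
        by_cases hxa : x = a
        · simp [hxa, hc1]
        · by_cases hxb : x = b
          · simp [hxa, hxb, hc2, hab.symm]
          · simp [hxa, hxb]
      right_inv := by
        rintro f
        ext x
        simp [x.2.1, x.2.2] }
  have h1 : (Finset.univ.filter fun c : α → β => c a = i ∧ c b = i').card
      = Fintype.card {c : α → β // c a = i ∧ c b = i'} := (Fintype.card_subtype _).symm
  have h2 : Fintype.card {x : α // x ≠ a ∧ x ≠ b} = Fintype.card α - 2 := by
    rw [Fintype.card_subtype]
    have : (Finset.univ.filter fun x : α => x ≠ a ∧ x ≠ b) = Finset.univ \ {a, b} := by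
      ext x; simp [not_or]
    rw [this, Finset.card_sdiff_of_subset (Finset.subset_univ _), Finset.card_pair hab,
      Finset.card_univ]
  rw [h1, Fintype.card_congr e, Fintype.card_fun, h2]

/-- If every assignment weakly satisfies at most `ε|𝓔|` hyperedges,
then for every integer `p ≥ 1` and all assignments `σ_1, …, σ_p`, at least
`(1 − p²ε)|𝓔|` hyperedges are colorful with respect to `σ_1, …, σ_p`. -/
theorem colorful_fraction [Fintype E] [Nonempty E]
    (hr : 2 ≤ r) (I : LabelCover r V L C E)
    (ε : ℝ) (hε : 0 ≤ ε)
    (hno : ∀ σ : V → L,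
      (Nat.card {h : E // I.WeaklySatisfies σ h} : ℝ) ≤ ε * Fintype.card E)
    (p : ℕ) (hp : 1 ≤ p) (σ : Fin p → V → L) :
    (1 - (p : ℝ) ^ 2 * ε) * Fintype.card E ≤
      (Nat.card {h : E // I.Colorful σ h} : ℝ) := by
  classical
  obtain ⟨h₀⟩ := ‹Nonempty E›
  set Ec := Fintype.card E with hEc
  -- distinct indices give distinct vertices
  have hu : ∀ (h : E) (j j' : Fin r), j ≠ j' → I.u h j ≠ I.u h j' := by
    intro h j j' hjj hne
    exact hjj (by rw [← I.hpart h j, hne, I.hpart])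
  -- a section picking a representative (edge, index) for each vertex in the image
  let s : V → E × Fin r := fun v =>
    if hv : ∃ q : E × Fin r, I.u q.1 q.2 = v then hv.choose
    else (h₀, ⟨0, lt_of_lt_of_le two_pos hr⟩)
  have hs : ∀ (h : E) (j : Fin r), I.u (s (I.u h j)).1 (s (I.u h j)).2 = I.u h j := by
    intro h j
    have hv : ∃ q : E × Fin r, I.u q.1 q.2 = I.u h j := ⟨(h, j), rfl⟩
    simp only [s, dif_pos hv]
    exact hv.choose_spec
  -- mixed assignments
  let τ : (E × Fin r → Fin p) → V → L := fun c v => σ (c (s v)) v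
  set n := Fintype.card (E × Fin r) with hn
  have hE1 : 1 ≤ Ec := Fintype.card_pos
  have hn2 : 2 ≤ n := by
    rw [hn, Fintype.card_prod, Fintype.card_fin]
    calc 2 = 1 * 2 := (one_mul 2).symm
    _ ≤ Ec * r := Nat.mul_le_mul hE1 hr
  -- each non-colorful edge is weakly satisfied by many mixed assignments
  have key : ∀ h : E, ¬ I.Colorful σ h →
      p ^ (n - 2) ≤
        (Finset.univ.filter fun c : E × Fin r → Fin p => I.WeaklySatisfies (τ c) h).card := by
    intro h hh
    simp only [LabelCover.Colorful] at hh; push_neg at hh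
    obtain ⟨i, i', j, j', hjj, heq⟩ := hh
    have hab : s (I.u h j) ≠ s (I.u h j') := by
      intro hss
      exact hu h j j' hjj (by rw [← hs h j, hss, hs h j'])
    have hsub : (Finset.univ.filter fun c : E × Fin r → Fin p =>
          c (s (I.u h j)) = i ∧ c (s (I.u h j')) = i')
        ⊆ Finset.univ.filter fun c => I.WeaklySatisfies (τ c) h := by
      intro c hc
      simp only [Finset.mem_filter, Finset.mem_univ, true_and] at hc ⊢
      exact ⟨j, j', hjj, by simp only [τ, hc.1, hc.2]; exact heq⟩
    calc p ^ (n - 2) = Fintype.card (Fin p) ^ (n - 2) := by rw [Fintype.card_fin]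
    _ = (Finset.univ.filter fun c : E × Fin r → Fin p =>
          c (s (I.u h j)) = i ∧ c (s (I.u h j')) = i').card := (card_fix_two hab i i').symm
    _ ≤ _ := Finset.card_le_card hsub
  set Bad := Finset.univ.filter fun h : E => ¬ I.Colorful σ h with hBad
  -- double counting
  have hswap : ∑ c : E × Fin r → Fin p, (Finset.univ.filter (I.WeaklySatisfies (τ c))).card
      = ∑ h : E, (Finset.univ.filter fun c : E × Fin r → Fin p =>
          I.WeaklySatisfies (τ c) h).card := by
    simp only [Finset.card_filter]
    exact Finset.sum_comm
  have hlow : Bad.card * p ^ (n - 2)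
      ≤ ∑ c : E × Fin r → Fin p, (Finset.univ.filter (I.WeaklySatisfies (τ c))).card := by
    rw [hswap]
    calc Bad.card * p ^ (n - 2) = ∑ _h ∈ Bad, p ^ (n - 2) := by
          rw [Finset.sum_const, smul_eq_mul]
    _ ≤ ∑ h ∈ Bad, (Finset.univ.filter fun c : E × Fin r → Fin p =>
          I.WeaklySatisfies (τ c) h).card := by
          apply Finset.sum_le_sum
          intro h hh
          exact key h (by simpa [hBad] using hh)
    _ ≤ ∑ h : E, (Finset.univ.filter fun c : E × Fin r → Fin p =>
          I.WeaklySatisfies (τ c) h).card :=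
          Finset.sum_le_sum_of_subset (Finset.subset_univ _)
  have hhigh : (∑ c : E × Fin r → Fin p,
        ((Finset.univ.filter (I.WeaklySatisfies (τ c))).card : ℝ))
      ≤ (p : ℝ) ^ n * (ε * Ec) := by
    have : ∀ c : E × Fin r → Fin p,
        ((Finset.univ.filter (I.WeaklySatisfies (τ c))).card : ℝ) ≤ ε * Ec := by
      intro c
      have := hno (τ c)
      rwa [Nat.card_eq_fintype_card, Fintype.card_subtype] at this
    calc (∑ c : E × Fin r → Fin p,
          ((Finset.univ.filter (I.WeaklySatisfies (τ c))).card : ℝ))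
        ≤ ∑ _c : E × Fin r → Fin p, ε * Ec := Finset.sum_le_sum fun c _ => this c
    _ = (p : ℝ) ^ n * (ε * Ec) := by
        rw [Finset.sum_const, nsmul_eq_mul, Finset.card_univ, Fintype.card_fun,
          Fintype.card_fin]
        push_cast
        ring
  -- combine
  have hppos : (0 : ℝ) < (p : ℝ) ^ (n - 2) := by positivity
  have hBadR : (Bad.card : ℝ) ≤ (p : ℝ) ^ 2 * ε * Ec := by
    have h1 : (Bad.card : ℝ) * (p : ℝ) ^ (n - 2) ≤ (p : ℝ) ^ n * (ε * Ec) := by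
      calc (Bad.card : ℝ) * (p : ℝ) ^ (n - 2)
          = ((Bad.card * p ^ (n - 2) : ℕ) : ℝ) := by push_cast; ring
      _ ≤ (∑ c : E × Fin r → Fin p,
            ((Finset.univ.filter (I.WeaklySatisfies (τ c))).card : ℝ)) := by
            rw [← Nat.cast_sum]
            exact_mod_cast hlow
      _ ≤ (p : ℝ) ^ n * (ε * Ec) := hhigh
    have hpow : (p : ℝ) ^ n = (p : ℝ) ^ 2 * (p : ℝ) ^ (n - 2) := by
      rw [← pow_add]
      congr 1
      omega
    rw [hpow] at h1
    have h2 : (Bad.card : ℝ) * (p : ℝ) ^ (n - 2)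
        ≤ ((p : ℝ) ^ 2 * ε * Ec) * (p : ℝ) ^ (n - 2) := by
      calc (Bad.card : ℝ) * (p : ℝ) ^ (n - 2) ≤ _ := h1
      _ = ((p : ℝ) ^ 2 * ε * Ec) * (p : ℝ) ^ (n - 2) := by ring
    exact le_of_mul_le_mul_right h2 hppos
  -- conclude
  have hcard : (Finset.univ.filter fun h : E => I.Colorful σ h).card + Bad.card = Ec := by
    rw [hBad, hEc, ← Finset.card_univ]
    exact Finset.card_filter_add_card_filter_not _
  have hcol : (Nat.card {h : E // I.Colorful σ h} : ℝ)
      = (Ec : ℝ) - (Bad.card : ℝ) := by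
    rw [Nat.card_eq_fintype_card, Fintype.card_subtype]
    have := hcard
    push_cast [← this]
    ring
  rw [hcol]
  have hring : (1 - (p : ℝ) ^ 2 * ε) * (Ec : ℝ) = (Ec : ℝ) - (p : ℝ) ^ 2 * ε * Ec := by
    ring
  rw [show ((Fintype.card E : ℕ) : ℝ) = (Ec : ℝ) from by rw [hEc], hring]
  linarith [hBadR]
end

section
/- Let Y_1, …, Y_k be independent random variables, each uniformly distributed on {0,1}, and let a_1, …, a_k be non-negative real numbers. Define X = Σ_{i=1}^k a_i Y_i, let μ = E[X] and σ = √(Var(X)). Then for every real c ∈ [0,1], Pr(X ≥ μ + c·σ) ≥ (1 − c)²/4. -/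
/-!
Write `X - 𝔼X = ∑ aᵢ (Yᵢ - 1/2)`, a sum of independent symmetric steps `±|aᵢ|/2`, with
`σ² = ∑ (aᵢ/2)²`. We prove by induction on the number of terms the unnormalized bound
`(σ - x)² ≤ 4σ² ℙ(Z ≥ x)` for `0 ≤ x ≤ σ`. Conditioning on one bit, with `b = |aⱼ|/2` and
`σ'² = σ² - b²` for the remaining sum `Z'`, gives `ℙ(Z ≥ x) = (ℙ(Z' ≥ x - b) + ℙ(Z' ≥ x + b))/2`.
If `x ≤ b`, the symmetry of `Z'` already gives `ℙ(Z' ≥ x - b) ≥ ℙ(Z' ≥ 0) ≥ 1/2`. Otherwise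
`0 < x - b ≤ σ'`, and the induction hypothesis at `x - b` (and at `x + b` when `x + b ≤ σ'`)
reduces the step to an elementary inequality using `σ² = b² + σ'²`.
-/

open MeasureTheory ProbabilityTheory Finset

lemma sub_le_of_sq_eq_add_sq {b s σ x : ℝ} (hb : 0 ≤ b) (hs : 0 ≤ s)
    (hσ : σ ^ 2 = b ^ 2 + s ^ 2) (hbx : b ≤ x) (hxσ : x ≤ σ) : x - b ≤ s := by
  nlinarith [mul_nonneg hb (sub_nonneg.2 hbx)]

lemma sq_mul_sq_sub_le {b s σ x : ℝ} (hσ : σ ^ 2 = b ^ 2 + s ^ 2) (hx : 0 ≤ x) (hxσ : x ≤ σ) :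
    s ^ 2 * (σ - x) ^ 2 ≤ σ ^ 2 * ((s - x) ^ 2 + b ^ 2) := by
  have hsσ : s ≤ σ := by nlinarith
  nlinarith [mul_nonneg (mul_nonneg hx (hx.trans hxσ)) (sub_nonneg.2 hsσ),
    mul_nonneg (mul_nonneg hx hx) (sub_nonneg.2 hsσ)]

lemma two_mul_sq_mul_sq_sub_le {b s σ x : ℝ} (hb : 0 ≤ b) (hs : 0 ≤ s)
    (hσ : σ ^ 2 = b ^ 2 + s ^ 2) (hbx : b ≤ x) (hxσ : x ≤ σ) (hsx : s ≤ x + b) :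
    2 * s ^ 2 * (σ - x) ^ 2 ≤ σ ^ 2 * (s + b - x) ^ 2 := by
  have hsσ : s ≤ σ := by nlinarith
  have hσsb : σ ≤ s + b := by nlinarith
  nlinarith [mul_nonneg (sub_nonneg.2 hxσ) (sub_nonneg.2 hsx),
    mul_nonneg (sub_nonneg.2 hxσ) (sub_nonneg.2 hσsb),
    mul_nonneg hs (sub_nonneg.2 hbx), mul_nonneg hs (sub_nonneg.2 hsσ)]

section

variable {Ω ι : Type*} {mΩ : MeasurableSpace Ω} {μ : Measure Ω}

structure IsFairBit (μ : Measure Ω) (Y : Ω → ℝ) : Prop where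
  measurable : Measurable Y
  eq_zero_or_eq_one : ∀ ω, Y ω = 0 ∨ Y ω = 1
  measure_eq_one : μ {ω | Y ω = 1} = 1 / 2

namespace IsFairBit

variable {Y : Ω → ℝ}

lemma measurableSet_eq (hY : IsFairBit μ Y) (y : ℝ) : MeasurableSet {ω | Y ω = y} :=
  hY.measurable (measurableSet_singleton y)

lemma measureReal_eq_one (hY : IsFairBit μ Y) : μ.real {ω | Y ω = 1} = 1 / 2 := by
  simp [measureReal_def, hY.measure_eq_one]

lemma measureReal_eq_zero [IsProbabilityMeasure μ] (hY : IsFairBit μ Y) :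
    μ.real {ω | Y ω = 0} = 1 / 2 := by
  have hcompl : {ω | Y ω = 0} = {ω | Y ω = 1}ᶜ := by
    ext ω
    rcases hY.eq_zero_or_eq_one ω with h | h <;> simp [h]
  rw [hcompl, measureReal_compl (hY.measurableSet_eq 1), probReal_univ,
    hY.measureReal_eq_one]
  norm_num

lemma memLp [IsFiniteMeasure μ] (hY : IsFairBit μ Y) (p : ENNReal) : MemLp Y p μ :=
  memLp_of_bounded (a := 0) (b := 1)
    (ae_of_all _ fun ω => by rcases hY.eq_zero_or_eq_one ω with h | h <;> simp [h])
    hY.measurable.aestronglyMeasurable p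

lemma integral_eq (hY : IsFairBit μ Y) : μ[Y] = 1 / 2 := by
  have hind : Y = {ω | Y ω = 1}.indicator 1 := by
    funext ω
    rcases hY.eq_zero_or_eq_one ω with h | h <;> simp [h]
  rw [hind, integral_indicator_one (hY.measurableSet_eq 1),
    hY.measureReal_eq_one]

lemma variance_eq [IsProbabilityMeasure μ] (hY : IsFairBit μ Y) : Var[Y; μ] = 1 / 4 := by
  have hsq : Y ^ 2 = Y := funext fun ω => by
    rcases hY.eq_zero_or_eq_one ω with h | h <;> simp [h]
  rw [variance_eq_sub (hY.memLp 2), hsq, hY.integral_eq]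
  norm_num

lemma measureReal_add_mul_mem [IsProbabilityMeasure μ] (hY : IsFairBit μ Y) {Z : Ω → ℝ}
    (hZ : Measurable Z) (hind : IndepFun Z Y μ) (a : ℝ)
    {S : Set ℝ} (hS : MeasurableSet S) :
    μ.real {ω | Z ω + a * (Y ω - 1 / 2) ∈ S} =
      (μ.real {ω | Z ω + a / 2 ∈ S} + μ.real {ω | Z ω - a / 2 ∈ S}) / 2 := by
  have hsplit : {ω | Z ω + a * (Y ω - 1 / 2) ∈ S} =
      ({ω | Z ω + a / 2 ∈ S} ∩ {ω | Y ω = 1}) ∪ ({ω | Z ω - a / 2 ∈ S} ∩ {ω | Y ω = 0}) := by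
    ext ω
    rcases hY.eq_zero_or_eq_one ω with h | h <;> simp [h] <;> ring_nf
  have hdisj : Disjoint ({ω | Z ω + a / 2 ∈ S} ∩ {ω | Y ω = 1})
      ({ω | Z ω - a / 2 ∈ S} ∩ {ω | Y ω = 0}) :=
    Set.disjoint_left.2 fun ω h₁ h₀ => by simp_all
  have hmul : ∀ c y : ℝ, μ.real ({ω | Z ω + c ∈ S} ∩ {ω | Y ω = y}) =
      μ.real {ω | Z ω + c ∈ S} * μ.real {ω | Y ω = y} := fun c y => by
    simp only [measureReal_def, ← ENNReal.toReal_mul]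
    congr 1
    exact hind.measure_inter_preimage_eq_mul _ {y} (measurable_add_const c hS)
      (measurableSet_singleton y)
  simp only [sub_eq_add_neg] at hsplit hdisj ⊢
  rw [hsplit, measureReal_union hdisj, hmul, hmul, hY.measureReal_eq_one, hY.measureReal_eq_zero]
  · ring
  · exact (hZ (measurable_add_const _ hS)).inter (hY.measurableSet_eq 0)

end IsFairBit

noncomputable def centeredSum (a : ι → ℝ) (Y : ι → Ω → ℝ) (t : Finset ι) (ω : Ω) : ℝ :=
  ∑ i ∈ t, a i * (Y i ω - 1 / 2)

section CenteredSum

variable {a : ι → ℝ} {Y : ι → Ω → ℝ}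

@[simp]
lemma centeredSum_empty : centeredSum a Y ∅ = 0 := by
  funext ω
  simp [centeredSum]

lemma centeredSum_insert [DecidableEq ι] {t : Finset ι} {j : ι} (hj : j ∉ t) (ω : Ω) :
    centeredSum a Y (insert j t) ω = centeredSum a Y t ω + a j * (Y j ω - 1 / 2) := by
  rw [centeredSum, sum_insert hj, add_comm, centeredSum]

lemma measurable_centeredSum (hmeas : ∀ i, Measurable (Y i)) (t : Finset ι) :
    Measurable (centeredSum a Y t) := by
  unfold centeredSum
  fun_prop

lemma indepFun_centeredSum (hmeas : ∀ i, Measurable (Y i)) (hindep : iIndepFun Y μ)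
    {t : Finset ι} {j : ι} (hj : j ∉ t) : IndepFun (centeredSum a Y t) (Y j) μ := by
  have h := hindep.indepFun_finset t {j} (disjoint_singleton_right.2 hj) hmeas
  have hφ : Measurable fun v : t → ℝ => ∑ i : t, a i * (v i - 1 / 2) := by fun_prop
  have hψ : Measurable fun v : ({j} : Finset ι) → ℝ => v ⟨j, mem_singleton_self j⟩ :=
    measurable_pi_apply _
  have h2 := h.comp hφ hψ
  convert h2 using 1
  · funext ω
    exact (sum_coe_sort t fun i => a i * (Y i ω - 1 / 2)).symm
  · rfl

lemma integral_sum_mul_of_isFairBit [IsFiniteMeasure μ] (hY : ∀ i, IsFairBit μ (Y i))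
    (t : Finset ι) :
    ∫ ω, ∑ i ∈ t, a i * Y i ω ∂μ = ∑ i ∈ t, a i / 2 := by
  rw [integral_finsetSum t fun i _ => (((hY i).memLp 1).integrable le_rfl).const_mul (a i)]
  simp only [integral_const_mul, (hY _).integral_eq]
  ring_nf

section ProbabilityMeasure

variable [IsProbabilityMeasure μ]

lemma measureReal_neg_centeredSum_mem (hY : ∀ i, IsFairBit μ (Y i)) (hindep : iIndepFun Y μ)
    (t : Finset ι) {S : Set ℝ} (hS : MeasurableSet S) :
    μ.real {ω | -centeredSum a Y t ω ∈ S} = μ.real {ω | centeredSum a Y t ω ∈ S} := by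
  classical
  induction t using Finset.induction_on generalizing S with
  | empty => simp
  | insert j t hj ih =>
    have hZ := measurable_centeredSum (a := a) (fun i => (hY i).measurable) t
    have hind := indepFun_centeredSum (a := a) (fun i => (hY i).measurable) hindep hj
    have hneg : ∀ x : ℝ, -x ∈ S ↔ x ∈ -S := fun x => Set.mem_neg.symm
    simp only [hneg, centeredSum_insert hj]
    rw [(hY j).measureReal_add_mul_mem hZ hind _ hS,
      (hY j).measureReal_add_mul_mem hZ hind _ hS.neg]
    have h₁ := ih (measurable_sub_const (a j / 2) hS)
    have h₂ := ih (measurable_add_const (a j / 2) hS)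
    simp only [Set.mem_preimage] at h₁ h₂
    simp only [Set.mem_neg, neg_add', neg_sub', sub_neg_eq_add]
    rw [h₁, h₂, add_comm]

lemma half_le_measureReal_centeredSum_nonneg (hY : ∀ i, IsFairBit μ (Y i))
    (hindep : iIndepFun Y μ) (t : Finset ι) :
    1 / 2 ≤ μ.real {ω | 0 ≤ centeredSum a Y t ω} := by
  have hsymm : μ.real {ω | centeredSum a Y t ω ≤ 0} = μ.real {ω | 0 ≤ centeredSum a Y t ω} := by
    simpa using measureReal_neg_centeredSum_mem hY hindep t (measurableSet_Ici (a := (0 : ℝ)))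
  have hcover : 1 ≤ μ.real {ω | 0 ≤ centeredSum a Y t ω} + μ.real {ω | centeredSum a Y t ω ≤ 0} :=
    calc 1 = μ.real Set.univ := probReal_univ.symm
      _ = μ.real ({ω | 0 ≤ centeredSum a Y t ω} ∪ {ω | centeredSum a Y t ω ≤ 0}) := by
        congr 1; ext ω; simp [le_total]
      _ ≤ _ := measureReal_union_le _ _
  linarith

lemma measureReal_le_centeredSum_insert [DecidableEq ι] (hY : ∀ i, IsFairBit μ (Y i))
    (hindep : iIndepFun Y μ) {t : Finset ι} {j : ι} (hj : j ∉ t) (x : ℝ) :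
    μ.real {ω | x ≤ centeredSum a Y (insert j t) ω} =
      (μ.real {ω | x - |a j| / 2 ≤ centeredSum a Y t ω} +
        μ.real {ω | x + |a j| / 2 ≤ centeredSum a Y t ω}) / 2 := by
  have hZ := measurable_centeredSum (a := a) (fun i => (hY i).measurable) t
  have hind := indepFun_centeredSum (a := a) (fun i => (hY i).measurable) hindep hj
  have h := (hY j).measureReal_add_mul_mem hZ hind (a j) (measurableSet_Ici (a := x))
  have e₁ : {ω | centeredSum a Y t ω + a j / 2 ∈ Set.Ici x} =
      {ω | x - a j / 2 ≤ centeredSum a Y t ω} := by ext; simp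
  have e₂ : {ω | centeredSum a Y t ω - a j / 2 ∈ Set.Ici x} =
      {ω | x + a j / 2 ≤ centeredSum a Y t ω} := by ext; simp [le_sub_iff_add_le]
  rw [e₁, e₂] at h
  simp only [centeredSum_insert hj]
  refine h.trans ?_
  rcases abs_cases (a j) with ⟨habs, -⟩ | ⟨habs, -⟩
  · rw [habs]
  · rw [habs, neg_div, sub_neg_eq_add, ← sub_eq_add_neg, add_comm]

lemma sq_sub_le_mul_measureReal_le_centeredSum (hY : ∀ i, IsFairBit μ (Y i))
    (hindep : iIndepFun Y μ) (t : Finset ι) {σ x : ℝ} (hσ0 : 0 ≤ σ)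
    (hσ : σ ^ 2 = ∑ i ∈ t, (a i / 2) ^ 2) (hx : 0 ≤ x) (hxσ : x ≤ σ) :
    (σ - x) ^ 2 ≤ 4 * σ ^ 2 * μ.real {ω | x ≤ centeredSum a Y t ω} := by
  classical
  induction t using Finset.induction_on generalizing σ x with
  | empty =>
    obtain rfl : σ = 0 := by simpa using hσ
    obtain rfl : x = 0 := le_antisymm hxσ hx
    simp
  | insert j t hj ih =>
    set b := |a j| / 2
    set s := √(∑ i ∈ t, (a i / 2) ^ 2)
    have hb : 0 ≤ b := by positivity
    have hs0 : 0 ≤ s := Real.sqrt_nonneg _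
    have hs : s ^ 2 = ∑ i ∈ t, (a i / 2) ^ 2 := Real.sq_sqrt (by positivity)
    have hσbs : σ ^ 2 = b ^ 2 + s ^ 2 := by rw [hσ, sum_insert hj, hs, div_pow, div_pow, sq_abs]
    rw [measureReal_le_centeredSum_insert hY hindep hj]
    set P₁ := μ.real {ω | x - b ≤ centeredSum a Y t ω}
    set P₂ := μ.real {ω | x + b ≤ centeredSum a Y t ω}
    have hP₂ : 0 ≤ P₂ := measureReal_nonneg
    rcases le_or_gt x b with hxb | hbx
    · have hP₁ : 1 / 2 ≤ P₁ := (half_le_measureReal_centeredSum_nonneg hY hindep t).trans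
        (measureReal_mono fun ω hω => (sub_nonpos.2 hxb).trans hω)
      nlinarith
    have hs_pos : 0 < s := by nlinarith
    have IH₁ := ih hs0 hs (x := x - b) (by linarith)
      (sub_le_of_sq_eq_add_sq hb hs0 hσbs hbx.le hxσ)
    refine le_of_mul_le_mul_left ?_ (pow_pos hs_pos 2)
    rcases le_or_gt (x + b) s with hxbs | hsxb
    · have IH₂ := ih hs0 hs (x := x + b) (by linarith) hxbs
      nlinarith [sq_mul_sq_sub_le hσbs hx hxσ, mul_le_mul_of_nonneg_left IH₁ (sq_nonneg σ),
        mul_le_mul_of_nonneg_left IH₂ (sq_nonneg σ)]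
    · nlinarith [two_mul_sq_mul_sq_sub_le hb hs0 hσbs hbx.le hxσ hsxb.le,
        mul_le_mul_of_nonneg_left IH₁ (sq_nonneg σ), mul_nonneg (sq_nonneg s) hP₂]

lemma one_sub_sq_div_four_le_measureReal_mul_le_centeredSum (hY : ∀ i, IsFairBit μ (Y i))
    (hindep : iIndepFun Y μ) (t : Finset ι) {σ c : ℝ} (hσ0 : 0 ≤ σ)
    (hσ : σ ^ 2 = ∑ i ∈ t, (a i / 2) ^ 2) (hc0 : 0 ≤ c) (hc1 : c ≤ 1) :
    (1 - c) ^ 2 / 4 ≤ μ.real {ω | c * σ ≤ centeredSum a Y t ω} := by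
  rcases hσ0.eq_or_lt with rfl | hσ_pos
  · rw [mul_zero]
    nlinarith [half_le_measureReal_centeredSum_nonneg (a := a) hY hindep t]
  have h := sq_sub_le_mul_measureReal_le_centeredSum hY hindep t hσ0 hσ (mul_nonneg hc0 hσ0)
    (mul_le_of_le_one_left hσ0 hc1)
  rw [← one_sub_mul, mul_pow, mul_comm] at h
  rw [div_le_iff₀' four_pos]
  exact le_of_mul_le_mul_left (by linarith) (pow_pos hσ_pos 2)

lemma variance_sum_mul_of_isFairBit (hY : ∀ i, IsFairBit μ (Y i))
    (hindep : iIndepFun Y μ) (t : Finset ι) :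
    Var[fun ω => ∑ i ∈ t, a i * Y i ω; μ] = ∑ i ∈ t, (a i / 2) ^ 2 := by
  have hsum : (fun ω => ∑ i ∈ t, a i * Y i ω) = ∑ i ∈ t, fun ω => a i * Y i ω := by
    funext ω
    simp [Finset.sum_apply]
  have hindep' : iIndepFun (fun i ω => a i * Y i ω) μ :=
    hindep.comp (fun i y => a i * y) fun i => measurable_const_mul (a i)
  rw [hsum, IndepFun.variance_sum (fun i _ => ((hY i).memLp 2).const_mul (a i))
    fun i _ j _ hij => hindep'.indepFun hij]
  refine sum_congr rfl fun i _ => ?_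
  rw [variance_const_mul, (hY i).variance_eq]
  ring

end ProbabilityMeasure

end CenteredSum

end

theorem bernoulli_anticoncentration_general {Ω : Type*} [MeasureSpace Ω]
    [IsProbabilityMeasure (ℙ : Measure Ω)]
    (k : ℕ) (Y : Fin k → Ω → ℝ) (a : Fin k → ℝ)
    (hmeas : ∀ i, Measurable (Y i))
    (hindep : iIndepFun Y ℙ)
    (hval : ∀ i ω, Y i ω = 0 ∨ Y i ω = 1)
    (hdist : ∀ i, ℙ {ω | Y i ω = 1} = 1 / 2) :
    ∀ c : ℝ, 0 ≤ c → c ≤ 1 →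
      ENNReal.ofReal ((1 - c) ^ 2 / 4) ≤
        ℙ {ω | (∫ ω', ∑ i, a i * Y i ω' ∂ℙ) +
            c * Real.sqrt (variance (fun ω' => ∑ i, a i * Y i ω') ℙ)
          ≤ ∑ i, a i * Y i ω} := by
  intro c hc0 hc1
  have hY : ∀ i, IsFairBit ℙ (Y i) := fun i => ⟨hmeas i, hval i, hdist i⟩
  have hset : {ω | (∫ ω', ∑ i, a i * Y i ω' ∂ℙ) +
      c * Real.sqrt (variance (fun ω' => ∑ i, a i * Y i ω') ℙ) ≤ ∑ i, a i * Y i ω} =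
      {ω | c * √(∑ i, (a i / 2) ^ 2) ≤ centeredSum a Y univ ω} := by
    rw [integral_sum_mul_of_isFairBit hY, variance_sum_mul_of_isFairBit hY hindep]
    ext ω
    simp only [Set.mem_ofPred_eq, centeredSum, mul_sub, sum_sub_distrib, mul_one_div]
    constructor <;> intro h <;> linarith
  rw [hset, ENNReal.ofReal_le_iff_le_toReal (measure_ne_top _ _)]
  exact one_sub_sq_div_four_le_measureReal_mul_le_centeredSum hY hindep univ
    (Real.sqrt_nonneg _) (Real.sq_sqrt (by positivity)) hc0 hc1

/-- Let `Y_1, …, Y_k` be independent random variables, each uniformly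
distributed on `{0,1}`, and let `a_1, …, a_k` be non-negative reals. Let
`X = Σ a_i Y_i`, `μ = E[X]`, `σ = √(Var X)`. Then for every `c ∈ [0,1]`,
`Pr(X ≥ μ + c·σ) ≥ (1 − c)²/4`. -/
theorem bernoulli_anticoncentration {Ω : Type*} [MeasureSpace Ω]
    [IsProbabilityMeasure (ℙ : Measure Ω)]
    (k : ℕ) (Y : Fin k → Ω → ℝ) (a : Fin k → ℝ) (ha : ∀ i, 0 ≤ a i)
    (hmeas : ∀ i, Measurable (Y i))
    (hindep : iIndepFun Y ℙ)
    (hval : ∀ i ω, Y i ω = 0 ∨ Y i ω = 1)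
    (hdist : ∀ i, ℙ {ω | Y i ω = 1} = 1 / 2) :
    ∀ c : ℝ, 0 ≤ c → c ≤ 1 →
      ENNReal.ofReal ((1 - c) ^ 2 / 4) ≤
        ℙ {ω | (∫ ω', ∑ i, a i * Y i ω' ∂ℙ) +
            c * Real.sqrt (variance (fun ω' => ∑ i, a i * Y i ω') ℙ)
          ≤ ∑ i, a i * Y i ω} :=
  bernoulli_anticoncentration_general k Y a hmeas hindep hval hdist
end

section
/- For all integers p, q ≥ 2 there exist 2q pairwise distinct vectors v_b^c ∈ {0,1}^{d_0}, indexed by b ∈ {1,2} and c ∈ [q], with d_0 = ⌈100 · p · log₂ q⌉, such that: (i) for every c ∈ [q], every coordinate of v_1^c + v_2^c is at most 1; and (ii) for every integer 1 ≤ p' ≤ p, every function β : [q] → {1,2}, and every multiplicity function w : [q] → ℕ with Σ_{c∈[q]} w(c) = p', one has ‖Σ_{c∈[q]} w(c) · v_{β(c)}^c‖_∞ ≥ p'/2 + √(p'/200). (Such a family is a (2, q, p)-modified vector system: p'/2 + √(p'/200) = p'/r + (1/10)√(p'/r) with r = 2.) -/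
open Finset

namespace MVS

noncomputable section

variable {q : ℕ}

def e' (b : Bool) : ℝ := if b then 1 else -1

lemma e_sq (b : Bool) : e' b * e' b = 1 := by cases b <;> simp [e']

lemma e_not (b : Bool) : e' (!b) = - e' b := by cases b <;> simp [e']

/-- partial signed sum -/
def St' (lam : Fin q → ℝ) (t : Finset (Fin q)) (r : Fin q → Bool) : ℝ :=
  ∑ c ∈ t, lam c * e' (r c)

lemma St'_update (lam : Fin q → ℝ) {t : Finset (Fin q)} {a : Fin q} (ha : a ∉ t)
    (r : Fin q → Bool) (b : Bool) : St' lam t (Function.update r a b) = St' lam t r := by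
  unfold St'
  refine Finset.sum_congr rfl fun c hc => ?_
  have hca : c ≠ a := fun h => ha (h ▸ hc)
  rw [Function.update_of_ne hca]

lemma cancel (a : Fin q) (G : (Fin q → Bool) → ℝ)
    (hG : ∀ r b, G (Function.update r a b) = G r) :
    ∑ r : Fin q → Bool, G r * e' (r a) = 0 := by
  classical
  refine Finset.sum_ninvolution (fun r => Function.update r a (!r a)) ?_ ?_ (fun _ => mem_univ _) ?_
  · intro r
    simp only [hG, Function.update_self, e_not]
    ring
  · intro r _ h
    apply Bool.not_ne_self (r a)
    have := congrFun h a
    simpa using this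
  · intro r
    funext x
    by_cases hx : x = a
    · subst hx; simp
    · simp [Function.update_of_ne hx]

lemma sum_const_one : (∑ _r : Fin q → Bool, (1:ℝ)) = 2 ^ q := by
  simp [Finset.card_univ]

lemma M2 (lam : Fin q → ℝ) (t : Finset (Fin q)) :
    ∑ r : Fin q → Bool, (St' lam t r) ^ 2 = 2 ^ q * ∑ c ∈ t, (lam c) ^ 2 := by
  classical
  induction t using Finset.induction with
  | empty => simp [St']
  | @insert a t ha ih =>
    have hins : ∀ r : Fin q → Bool, St' lam (insert a t) r = St' lam t r + lam a * e' (r a) := by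
      intro r; unfold St'; rw [Finset.sum_insert ha]; ring
    have key : ∑ r : Fin q → Bool, (St' lam t r + lam a * e' (r a)) ^ 2
        = ∑ r : Fin q → Bool, ((St' lam t r) ^ 2 + (2 * lam a) * (St' lam t r * e' (r a))
            + lam a ^ 2 * 1) := by
      refine Finset.sum_congr rfl fun r _ => ?_
      have := e_sq (r a)
      nlinarith [e_sq (r a)]
    simp only [hins, key, Finset.sum_add_distrib, ← Finset.mul_sum]
    rw [show (∑ r : Fin q → Bool, St' lam t r * e' (r a)) = 0 from
      cancel a _ (fun r b => St'_update lam ha r b)]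
    rw [Finset.sum_insert ha]
    have := sum_const_one (q := q)
    simp only [mul_one] at *
    rw [ih, this]
    ring

lemma M4 (lam : Fin q → ℝ) (t : Finset (Fin q)) :
    ∑ r : Fin q → Bool, (St' lam t r) ^ 4 ≤ 3 * 2 ^ q * (∑ c ∈ t, (lam c) ^ 2) ^ 2 := by
  classical
  induction t using Finset.induction with
  | empty =>
    simp [St']
  | @insert a t ha ih =>
    have hins : ∀ r : Fin q → Bool, St' lam (insert a t) r = St' lam t r + lam a * e' (r a) := by
      intro r; unfold St'; rw [Finset.sum_insert ha]; ring
    have key : ∀ r : Fin q → Bool, (St' lam t r + lam a * e' (r a)) ^ 4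
        = (St' lam t r) ^ 4 + 6 * lam a ^ 2 * (St' lam t r) ^ 2 + lam a ^ 4
          + (4 * (St' lam t r) ^ 3 + 4 * lam a ^ 2 * St' lam t r) * (lam a * e' (r a)) := by
      intro r
      cases h : r a <;> simp [e'] <;> ring
    have hzero : ∑ r : Fin q → Bool,
        ((4 * (St' lam t r) ^ 3 + 4 * lam a ^ 2 * St' lam t r) * (lam a * e' (r a))) = 0 := by
      have : ∀ r : Fin q → Bool,
          (4 * (St' lam t r) ^ 3 + 4 * lam a ^ 2 * St' lam t r) * (lam a * e' (r a))
          = ((4 * (St' lam t r) ^ 3 + 4 * lam a ^ 2 * St' lam t r) * lam a) * e' (r a) := by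
        intro r; ring
      simp only [this]
      refine cancel a _ (fun r b => ?_)
      rw [St'_update lam ha r b]
    simp only [hins]
    calc ∑ r : Fin q → Bool, (St' lam t r + lam a * e' (r a)) ^ 4
        = ∑ r : Fin q → Bool, ((St' lam t r) ^ 4 + 6 * lam a ^ 2 * (St' lam t r) ^ 2 + lam a ^ 4)
          + ∑ r : Fin q → Bool,
            ((4 * (St' lam t r) ^ 3 + 4 * lam a ^ 2 * St' lam t r) * (lam a * e' (r a))) := by
          rw [← Finset.sum_add_distrib]
          exact Finset.sum_congr rfl fun r _ => by rw [key r]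
      _ = ∑ r : Fin q → Bool, (St' lam t r) ^ 4 + 6 * lam a ^ 2 * ∑ r : Fin q → Bool, (St' lam t r) ^ 2
          + 2 ^ q * lam a ^ 4 := by
          rw [hzero, add_zero, Finset.sum_add_distrib, Finset.sum_add_distrib, ← Finset.mul_sum,
            Finset.sum_const, Finset.card_univ]
          simp [Finset.card_univ]
      _ ≤ 3 * 2 ^ q * (∑ c ∈ t, (lam c) ^ 2) ^ 2
          + 6 * lam a ^ 2 * (2 ^ q * ∑ c ∈ t, (lam c) ^ 2) + 2 ^ q * lam a ^ 4 := by
          rw [M2]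
          linarith [ih]
      _ ≤ 3 * 2 ^ q * (∑ c ∈ insert a t, (lam c) ^ 2) ^ 2 := by
          rw [Finset.sum_insert ha]
          have h2q : (0:ℝ) < 2 ^ q := by positivity
          have hV : (0:ℝ) ≤ ∑ c ∈ t, (lam c) ^ 2 :=
            Finset.sum_nonneg fun c _ => sq_nonneg _
          nlinarith [mul_nonneg h2q.le (sq_nonneg (lam a ^ 2)), mul_nonneg h2q.le hV,
            mul_nonneg (mul_nonneg h2q.le hV) (sq_nonneg (lam a))]



lemma PZ (lam : Fin q → ℝ) (hV : 0 < ∑ c, lam c ^ 2) :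
    (3:ℝ)/10 * 2 ^ q ≤ ((univ.filter (fun r : Fin q → Bool =>
      (∑ c, lam c ^ 2)/50 ≤ (St' lam univ r)^2)).card : ℝ) := by
  classical
  set V := ∑ c, lam c ^ 2 with hVdef
  set G := univ.filter (fun r : Fin q → Bool => V/50 ≤ (St' lam univ r)^2) with hG
  have hsplit : ∑ r : Fin q → Bool, (St' lam univ r) ^ 2
      = ∑ r ∈ G, (St' lam univ r) ^ 2 + ∑ r ∈ univ \ G, (St' lam univ r) ^ 2 := by
    rw [add_comm, Finset.sum_sdiff (Finset.filter_subset _ _)]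
  have hcomp : ∑ r ∈ univ \ G, (St' lam univ r) ^ 2 ≤ (2:ℝ) ^ q * (V / 50) := by
    calc ∑ r ∈ univ \ G, (St' lam univ r) ^ 2 ≤ ∑ _r ∈ univ \ G, V / 50 := by
          refine Finset.sum_le_sum fun r hr => ?_
          rw [hG, Finset.mem_sdiff, Finset.mem_filter] at hr
          push_neg at hr
          exact le_of_lt (hr.2 (Finset.mem_univ r))
      _ = ((univ \ G).card : ℝ) * (V / 50) := by rw [Finset.sum_const, nsmul_eq_mul]
      _ ≤ (2:ℝ) ^ q * (V / 50) := by
          have : ((univ \ G).card : ℝ) ≤ 2 ^ q := by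
            have h1 : (univ \ G).card ≤ (univ : Finset (Fin q → Bool)).card :=
              Finset.card_le_card (Finset.sdiff_subset)
            have h2 : (univ : Finset (Fin q → Bool)).card = 2 ^ q := by
              simp [Finset.card_univ]
            calc ((univ \ G).card : ℝ) ≤ ((univ : Finset (Fin q → Bool)).card : ℝ) := by
                  exact_mod_cast h1
              _ = 2 ^ q := by exact_mod_cast h2
          have hv50 : 0 ≤ V / 50 := by positivity
          exact mul_le_mul_of_nonneg_right this hv50
  have hGsum : (49:ℝ)/50 * 2 ^ q * V ≤ ∑ r ∈ G, (St' lam univ r) ^ 2 := by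
    have := M2 lam (univ : Finset (Fin q))
    rw [hsplit] at this
    nlinarith [hcomp]
  have hCS : (∑ r ∈ G, (St' lam univ r) ^ 2) ^ 2 ≤ (G.card : ℝ) * (3 * 2 ^ q * V ^ 2) := by
    have cs := Finset.sum_mul_sq_le_sq_mul_sq G (fun _ => (1:ℝ)) (fun r => (St' lam univ r)^2)
    simp only [one_mul, one_pow] at cs
    have h4 : ∑ r ∈ G, ((St' lam univ r) ^ 2) ^ 2 ≤ 3 * 2 ^ q * V ^ 2 := by
      have hle : ∑ r ∈ G, ((St' lam univ r) ^ 2) ^ 2 ≤ ∑ r : Fin q → Bool, (St' lam univ r) ^ 4 := by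
        have : ∀ r, ((St' lam univ r) ^ 2) ^ 2 = (St' lam univ r) ^ 4 := fun r => by ring
        simp only [this]
        exact Finset.sum_le_sum_of_subset_of_nonneg (Finset.subset_univ _)
          (fun r _ _ => by positivity)
      exact hle.trans (M4 lam univ)
    calc (∑ r ∈ G, (St' lam univ r) ^ 2) ^ 2
        ≤ (∑ _r ∈ G, (1:ℝ)) * ∑ r ∈ G, ((St' lam univ r) ^ 2) ^ 2 := cs
      _ ≤ (G.card : ℝ) * (3 * 2 ^ q * V ^ 2) := by
          rw [Finset.sum_const, nsmul_eq_mul, mul_one]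
          exact mul_le_mul_of_nonneg_left h4 (by positivity)
  -- combine
  have h2q : (0:ℝ) < 2 ^ q := by positivity
  have hsq : ((49:ℝ)/50 * 2 ^ q * V)^2 ≤ (∑ r ∈ G, (St' lam univ r) ^ 2)^2 :=
    pow_le_pow_left₀ (by positivity) hGsum 2
  nlinarith [hsq, hCS, mul_pos h2q (mul_pos hV hV), mul_pos (mul_pos h2q h2q) (mul_pos hV hV)]

/-- rows that fail for a given integer vector -/
def badRow (lam : Fin q → ℤ) : Finset (Fin q → Bool) :=
  univ.filter (fun r => (St' (fun c => (lam c : ℝ)) univ r)^2 < ((∑ c, |lam c| : ℤ) : ℝ)/50)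

lemma badRow_card (lam : Fin q → ℤ) : ((badRow lam).card : ℝ) ≤ 7/10 * 2 ^ q := by
  classical
  by_cases hz : (∑ c, |lam c|) = 0
  · have : badRow lam = ∅ := by
      refine Finset.filter_false_of_mem fun r _ => ?_
      rw [hz]
      push_cast
      nlinarith [sq_nonneg (St' (fun c => (lam c : ℝ)) univ r)]
    rw [this]
    simp only [Finset.card_empty, Nat.cast_zero]
    positivity
  · set lamR : Fin q → ℝ := fun c => (lam c : ℝ) with hlamR
    have habs : ((∑ c, |lam c| : ℤ) : ℝ) ≤ ∑ c, lamR c ^ 2 := by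
      push_cast
      refine Finset.sum_le_sum fun c _ => ?_
      have h1 : |lam c| ≤ |lam c| ^ 2 := Int.le_self_sq _
      have h2 : |lam c| ^ 2 = lam c ^ 2 := sq_abs _
      have : |lam c| ≤ lam c ^ 2 := h1.trans_eq h2
      calc (|lam c| : ℝ) ≤ ((lam c ^ 2 : ℤ) : ℝ) := by exact_mod_cast this
        _ = (lam c : ℝ) ^ 2 := by push_cast; ring
    have hpos : (0:ℝ) < ∑ c, lamR c ^ 2 := by
      have h1 : (1:ℤ) ≤ ∑ c, |lam c| := by
        rcases (Finset.sum_nonneg (fun c (_ : c ∈ univ) => abs_nonneg (lam c))).lt_or_eq with h | h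
        · omega
        · exact absurd h.symm hz
      have : (1:ℝ) ≤ ((∑ c, |lam c| : ℤ) : ℝ) := by exact_mod_cast h1
      linarith
    have hsub : badRow lam ⊆ univ \ (univ.filter (fun r : Fin q → Bool =>
        (∑ c, lamR c ^ 2)/50 ≤ (St' lamR univ r)^2)) := by
      intro r hr
      rw [badRow, Finset.mem_filter] at hr
      rw [Finset.mem_sdiff, Finset.mem_filter]
      refine ⟨Finset.mem_univ r, fun hG => ?_⟩
      have : (St' lamR univ r)^2 < (∑ c, lamR c ^ 2)/50 := lt_of_lt_of_le hr.2 (by linarith)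
      exact absurd hG.2 (not_le.mpr this)
    have hPZ := PZ lamR hpos
    have hcard : (badRow lam).card ≤ 2 ^ q - (univ.filter (fun r : Fin q → Bool =>
        (∑ c, lamR c ^ 2)/50 ≤ (St' lamR univ r)^2)).card := by
      have := Finset.card_le_card hsub
      rwa [Finset.card_sdiff_of_subset (Finset.subset_univ _), Finset.card_univ,
        Fintype.card_fun, Fintype.card_bool, Fintype.card_fin] at this
    have hGle : (univ.filter (fun r : Fin q → Bool =>
        (∑ c, lamR c ^ 2)/50 ≤ (St' lamR univ r)^2)).card ≤ 2 ^ q := by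
      calc _ ≤ (univ : Finset (Fin q → Bool)).card := Finset.card_le_card (Finset.filter_subset _ _)
        _ = 2 ^ q := by rw [Finset.card_univ, Fintype.card_fun, Fintype.card_bool, Fintype.card_fin]
    have : ((badRow lam).card : ℝ) ≤ 2 ^ q - ((univ.filter (fun r : Fin q → Bool =>
        (∑ c, lamR c ^ 2)/50 ≤ (St' lamR univ r)^2)).card : ℝ) := by
      have h2 : ((badRow lam).card : ℝ) ≤ ((2 ^ q - (univ.filter (fun r : Fin q → Bool =>
          (∑ c, lamR c ^ 2)/50 ≤ (St' lamR univ r)^2)).card : ℕ) : ℝ) := by exact_mod_cast hcard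
      rw [Nat.cast_sub hGle] at h2
      push_cast at h2 ⊢
      linarith
    linarith [hPZ]

/-- effect of one letter -/
def wEff (o : Option (Fin q × Bool)) (c : Fin q) : ℤ :=
  match o with
  | none => 0
  | some (c', s) => if c' = c then (if s then 1 else -1) else 0

def lamOf {n : ℕ} (u : Fin n → Option (Fin q × Bool)) (c : Fin q) : ℤ := ∑ j, wEff (u j) c

lemma surj_words (n : ℕ) : ∀ lam : Fin q → ℤ, (∑ c, |lam c|) ≤ n →
    ∃ u : Fin n → Option (Fin q × Bool), lam = lamOf u := by
  induction n with
  | zero =>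
    intro lam hlam
    refine ⟨fun j => none, funext fun c => ?_⟩
    have hz : ∀ c, |lam c| = 0 := by
      intro c
      have h1 : ∀ c ∈ (univ : Finset (Fin q)), (0:ℤ) ≤ |lam c| := fun c _ => abs_nonneg _
      have h2 : (∑ c, |lam c|) = 0 :=
        le_antisymm (by exact_mod_cast hlam) (Finset.sum_nonneg h1)
      have := (Finset.sum_eq_zero_iff_of_nonneg h1).mp h2 c (Finset.mem_univ c)
      omega
    have : lam c = 0 := abs_eq_zero.mp (hz c)
    rw [this, lamOf]
    simp [wEff]
  | succ n ih =>
    intro lam hlam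
    by_cases h0 : lam = 0
    · refine ⟨fun j => none, funext fun c => ?_⟩
      rw [h0, lamOf]
      simp [wEff]
    · obtain ⟨c₀, hc₀⟩ : ∃ c₀, lam c₀ ≠ 0 := by
        by_contra hall
        push_neg at hall
        exact h0 (funext hall)
      set sgn : Bool := decide (0 < lam c₀) with hsgn
      set delta : Fin q → ℤ := wEff (some (c₀, sgn)) with hdelta
      set lam' : Fin q → ℤ := fun c => lam c - delta c with hlam'
      have hdc : ∀ c, delta c = if c₀ = c then (if sgn then 1 else -1) else 0 := fun c => rfl
      have habs' : ∀ c, |lam' c| = if c₀ = c then |lam c| - 1 else |lam c| := by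
        intro c
        have hev : lam' c = lam c - delta c := rfl
        by_cases hcc : c₀ = c
        · subst hcc
          rw [hev, hdc, if_pos rfl]
          rcases lt_trichotomy (lam c₀) 0 with h | h | h
          · have : sgn = false := by rw [hsgn]; simp; omega
            rw [this]
            simp only [Bool.false_eq_true, if_false, if_pos rfl]
            rw [abs_of_nonpos (by omega), abs_of_neg h]
            simp
            ring
          · exact absurd h hc₀
          · have : sgn = true := by rw [hsgn]; simp [h]
            rw [this]
            simp only [if_pos rfl]
            rw [abs_of_nonneg (by omega), abs_of_pos h]
            simp
        · rw [hev, hdc, if_neg hcc, if_neg hcc]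
          simp
      have hsum' : (∑ c, |lam' c|) ≤ n := by
        have hid : ∀ c ∈ (univ : Finset (Fin q)),
            |lam c| = |lam' c| + (if c₀ = c then 1 else 0) := by
          intro c _
          rw [habs' c]
          by_cases hcc : c₀ = c <;> simp [hcc]
        have h1 : (∑ c, |lam c|) = (∑ c, |lam' c|) + 1 := by
          rw [Finset.sum_congr rfl hid, Finset.sum_add_distrib]
          congr 1
          rw [Finset.sum_ite_eq (univ : Finset (Fin q)) c₀ (fun _ => (1:ℤ))]
          simp
        have hlam2 : (∑ c, |lam c|) ≤ (n:ℤ) + 1 := by push_cast at hlam ⊢; linarith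
        omega
      obtain ⟨u', hu'⟩ := ih lam' hsum'
      refine ⟨Fin.cons (some (c₀, sgn)) u', funext fun c => ?_⟩
      rw [lamOf, Fin.sum_univ_succ]
      simp only [Fin.cons_zero, Fin.cons_succ]
      have : lam' c = lamOf u' c := by rw [hu']
      rw [← lamOf, ← this, hlam']
      simp [hdelta]

/-- rows where coordinates c and c' agree (s = false) or disagree (s = true) -/
def pairRow (c c' : Fin q) (s : Bool) : Finset (Fin q → Bool) :=
  univ.filter (fun r => r c = xor s (r c'))

lemma pairRow_card {c c' : Fin q} (h : c ≠ c') (s : Bool) :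
    2 * (pairRow c c' s).card = 2 ^ q := by
  classical
  have key : (pairRow c c' s).card
      = (univ.filter (fun r : Fin q → Bool => ¬ (r c = xor s (r c')))).card := by
    refine Finset.card_bij' (fun r _ => Function.update r c (!r c))
      (fun r _ => Function.update r c (!r c)) ?_ ?_ ?_ ?_
    · intro r hr
      rw [pairRow, Finset.mem_filter] at hr
      rw [Finset.mem_filter]
      refine ⟨Finset.mem_univ _, ?_⟩
      simp only [Function.update_self, Function.update_of_ne (Ne.symm h)]
      rw [hr.2]
      simp
    · intro r hr
      rw [Finset.mem_filter] at hr
      rw [pairRow, Finset.mem_filter]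
      refine ⟨Finset.mem_univ _, ?_⟩
      simp only [Function.update_self, Function.update_of_ne (Ne.symm h)]
      cases hrc : r c <;> cases hrc' : r c' <;> cases s <;> simp_all
    · intro r _
      funext x
      by_cases hx : x = c
      · subst hx; simp
      · simp [Function.update_of_ne hx]
    · intro r _
      funext x
      by_cases hx : x = c
      · subst hx; simp
      · simp [Function.update_of_ne hx]
  have split := Finset.card_filter_add_card_filter_not
    (s := (univ : Finset (Fin q → Bool))) (p := fun r : Fin q → Bool => r c = xor s (r c'))
  rw [Finset.card_univ, Fintype.card_fun, Fintype.card_bool, Fintype.card_fin] at split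
  rw [pairRow] at key ⊢
  rw [two_mul]
  nth_rewrite 2 [key]
  exact split

def GoodP1 (p : ℕ) {d1 : ℕ} (ω : Fin d1 → Fin q → Bool) : Prop :=
  ∀ lam : Fin q → ℤ, 1 ≤ (∑ c, |lam c|) → (∑ c, |lam c|) ≤ p →
    ∃ i, ((∑ c, |lam c| : ℤ) : ℝ)/50 ≤ (St' (fun c => (lam c : ℝ)) univ (ω i))^2

def GoodP2 {d1 : ℕ} (ω : Fin d1 → Fin q → Bool) : Prop :=
  ∀ c c' : Fin q, c ≠ c' → (∃ i, ω i c = ω i c') ∧ (∃ i, ω i c ≠ ω i c')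

lemma exists_good (p d1 : ℕ)
    (hnum : ((2 * q + 1 : ℕ) : ℝ) ^ p * (7/10) ^ d1 + ((q * q : ℕ) : ℝ) * 2 * (1/2) ^ d1 < 1) :
    ∃ ω : Fin d1 → Fin q → Bool, GoodP1 p ω ∧ GoodP2 ω := by
  classical
  by_contra hcon
  push_neg at hcon
  -- the bad sets
  set A : Finset (Fin d1 → Fin q → Bool) :=
    (univ : Finset (Fin p → Option (Fin q × Bool))).biUnion
      (fun u => Fintype.piFinset (fun _ : Fin d1 => badRow (lamOf u))) with hA
  set B : Finset (Fin d1 → Fin q → Bool) :=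
    (univ : Finset ((Fin q × Fin q) × Bool)).biUnion
      (fun x => if x.1.1 = x.1.2 then ∅
        else Fintype.piFinset (fun _ : Fin d1 => pairRow x.1.1 x.1.2 x.2)) with hB
  have hcover : (univ : Finset (Fin d1 → Fin q → Bool)) ⊆ A ∪ B := by
    intro ω _
    rcases Classical.em (GoodP1 (q := q) p ω) with h1 | h1
    · -- then ¬ GoodP2
      have h2 := hcon ω h1
      rw [GoodP2] at h2
      push_neg at h2
      obtain ⟨c, c', hne, hbad⟩ := h2
      rw [Finset.mem_union]
      right
      rw [hB, Finset.mem_biUnion]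
      rcases Classical.em (∃ i, ω i c = ω i c') with he | he
      · have hall : ∀ i, ω i c = ω i c' := hbad he
        refine ⟨((c, c'), false), Finset.mem_univ _, ?_⟩
        rw [if_neg hne]
        rw [Fintype.mem_piFinset]
        intro i
        rw [pairRow, Finset.mem_filter]
        exact ⟨Finset.mem_univ _, by rw [hall i]; simp⟩
      · push_neg at he
        refine ⟨((c, c'), true), Finset.mem_univ _, ?_⟩
        rw [if_neg hne]
        rw [Fintype.mem_piFinset]
        intro i
        rw [pairRow, Finset.mem_filter]
        refine ⟨Finset.mem_univ _, ?_⟩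
        have := he i
        cases h1 : ω i c <;> cases h2 : ω i c' <;> simp_all
    · rw [GoodP1] at h1
      push_neg at h1
      obtain ⟨lam, hl1, hl2, hall⟩ := h1
      obtain ⟨u, hu⟩ := surj_words p lam hl2
      rw [Finset.mem_union]
      left
      rw [hA, Finset.mem_biUnion]
      refine ⟨u, Finset.mem_univ _, ?_⟩
      rw [Fintype.mem_piFinset]
      intro i
      rw [badRow, Finset.mem_filter]
      exact ⟨Finset.mem_univ _, by rw [← hu]; exact hall i⟩
  -- cardinality bounds
  have hcardA : (A.card : ℝ) ≤ ((2 * q + 1 : ℕ) : ℝ) ^ p * ((7/10) * 2 ^ q) ^ d1 := by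
    calc (A.card : ℝ)
        ≤ ∑ u : Fin p → Option (Fin q × Bool),
            ((Fintype.piFinset (fun _ : Fin d1 => badRow (lamOf u))).card : ℝ) := by
          rw [hA]
          exact_mod_cast Nat.cast_le.mpr (Finset.card_biUnion_le)
      _ ≤ ∑ _u : Fin p → Option (Fin q × Bool), ((7/10) * 2 ^ q : ℝ) ^ d1 := by
          refine Finset.sum_le_sum fun u _ => ?_
          rw [Fintype.card_piFinset]
          rw [Finset.prod_const, Finset.card_univ, Fintype.card_fin]
          push_cast
          exact pow_le_pow_left₀ (by positivity) (badRow_card (lamOf u)) d1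
      _ = ((2 * q + 1 : ℕ) : ℝ) ^ p * ((7/10) * 2 ^ q) ^ d1 := by
          rw [Finset.sum_const, Finset.card_univ, nsmul_eq_mul]
          congr 1
          rw [Fintype.card_fun]
          simp [Fintype.card_option, mul_comm]
  have hcardB : (B.card : ℝ) ≤ ((q * q : ℕ) : ℝ) * 2 * ((2:ℝ) ^ q / 2) ^ d1 := by
    calc (B.card : ℝ)
        ≤ ∑ x : (Fin q × Fin q) × Bool, (((if x.1.1 = x.1.2 then (∅ : Finset _)
            else Fintype.piFinset (fun _ : Fin d1 => pairRow x.1.1 x.1.2 x.2))).card : ℝ) := by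
          rw [hB]
          exact_mod_cast Nat.cast_le.mpr Finset.card_biUnion_le
      _ ≤ ∑ _x : (Fin q × Fin q) × Bool, ((2:ℝ) ^ q / 2) ^ d1 := by
          refine Finset.sum_le_sum fun x _ => ?_
          by_cases hx : x.1.1 = x.1.2
          · rw [if_pos hx]
            simp only [Finset.card_empty, Nat.cast_zero]
            positivity
          · rw [if_neg hx]
            rw [Fintype.card_piFinset, Finset.prod_const, Finset.card_univ, Fintype.card_fin]
            push_cast
            refine pow_le_pow_left₀ (by positivity) ?_ d1
            have h2 := pairRow_card hx x.2
            have h3 : ((pairRow x.1.1 x.1.2 x.2).card : ℝ) = 2 ^ q / 2 := by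
              have h4 : ((2 * (pairRow x.1.1 x.1.2 x.2).card : ℕ) : ℝ) = ((2 ^ q : ℕ) : ℝ) := by
                exact_mod_cast congrArg (fun n : ℕ => (n : ℝ)) h2
              push_cast at h4
              linarith
            linarith [h3.le]
      _ = ((q * q : ℕ) : ℝ) * 2 * ((2:ℝ) ^ q / 2) ^ d1 := by
          rw [Finset.sum_const, Finset.card_univ, nsmul_eq_mul]
          congr 1
          rw [Fintype.card_prod, Fintype.card_prod, Fintype.card_bool, Fintype.card_fin]
          push_cast
          ring
  have htot : (((2:ℝ) ^ q) ^ d1 : ℝ) ≤ (A.card : ℝ) + (B.card : ℝ) := by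
    have h1 : (univ : Finset (Fin d1 → Fin q → Bool)).card ≤ A.card + B.card :=
      le_trans (Finset.card_le_card hcover) (Finset.card_union_le A B)
    have h2 : (univ : Finset (Fin d1 → Fin q → Bool)).card = (2 ^ q) ^ d1 := by
      rw [Finset.card_univ, Fintype.card_fun, Fintype.card_fun, Fintype.card_bool,
        Fintype.card_fin, Fintype.card_fin]
    rw [h2] at h1
    exact_mod_cast h1
  have hpow : (0:ℝ) < ((2:ℝ) ^ q) ^ d1 := by positivity
  have hA2 : (A.card : ℝ) ≤ ((2 * q + 1 : ℕ) : ℝ) ^ p * (7/10) ^ d1 * ((2:ℝ) ^ q) ^ d1 := by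
    calc (A.card : ℝ) ≤ ((2 * q + 1 : ℕ) : ℝ) ^ p * ((7/10) * 2 ^ q) ^ d1 := hcardA
      _ = ((2 * q + 1 : ℕ) : ℝ) ^ p * (7/10) ^ d1 * ((2:ℝ) ^ q) ^ d1 := by
          rw [mul_pow]; ring
  have hB2 : (B.card : ℝ) ≤ ((q * q : ℕ) : ℝ) * 2 * (1/2) ^ d1 * ((2:ℝ) ^ q) ^ d1 := by
    calc (B.card : ℝ) ≤ ((q * q : ℕ) : ℝ) * 2 * ((2:ℝ) ^ q / 2) ^ d1 := hcardB
      _ = ((q * q : ℕ) : ℝ) * 2 * (1/2) ^ d1 * ((2:ℝ) ^ q) ^ d1 := by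
          rw [div_eq_mul_one_div ((2:ℝ)^q) 2, mul_pow]
          ring
  have : ((2:ℝ) ^ q) ^ d1 < ((2:ℝ) ^ q) ^ d1 := by
    calc ((2:ℝ) ^ q) ^ d1 ≤ (A.card : ℝ) + (B.card : ℝ) := htot
      _ ≤ (((2 * q + 1 : ℕ) : ℝ) ^ p * (7/10) ^ d1
            + ((q * q : ℕ) : ℝ) * 2 * (1/2) ^ d1) * ((2:ℝ) ^ q) ^ d1 := by
          rw [add_mul]
          exact add_le_add hA2 hB2
      _ < 1 * ((2:ℝ) ^ q) ^ d1 := by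
          exact mul_lt_mul_of_pos_right hnum hpow
      _ = ((2:ℝ) ^ q) ^ d1 := one_mul _
  exact absurd this (lt_irrefl _)

lemma numeric (p q d1 : ℕ) (hp : 2 ≤ p) (hq : 2 ≤ q)
    (hd1 : 49 * (p:ℝ) * Real.logb 2 q ≤ (d1:ℝ)) :
    ((2 * q + 1 : ℕ) : ℝ) ^ p * (7/10) ^ d1 + ((q * q : ℕ) : ℝ) * 2 * ((1:ℝ)/2) ^ d1 < 1 := by
  set K := Real.logb 2 q with hK
  have hqR : (2:ℝ) ≤ (q:ℝ) := by exact_mod_cast hq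
  have hq0 : (0:ℝ) < q := by linarith
  have hK1 : 1 ≤ K := by
    rw [hK]
    calc (1:ℝ) = Real.logb 2 2 := (Real.logb_self_eq_one (by norm_num)).symm
      _ ≤ Real.logb 2 q := (Real.logb_le_logb (by norm_num) (by norm_num) hq0).mpr hqR
  have hpR : (2:ℝ) ≤ (p:ℝ) := by exact_mod_cast hp
  have hpK : (2:ℝ) ≤ (p:ℝ) * K := by nlinarith
  have hqK : (q:ℝ) = (2:ℝ) ^ K := (Real.rpow_logb (by norm_num) (by norm_num) hq0).symm
  -- term 1
  have h1 : ((2 * q + 1 : ℕ) : ℝ) ^ p * (7/10) ^ d1 ≤ 1/4 := by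
    have s1 : ((2 * q + 1 : ℕ) : ℝ) ≤ (q:ℝ) ^ (3:ℕ) := by
      push_cast
      have e1 : (2:ℝ) * q ≤ (q:ℝ)^2 := by nlinarith
      have e2 : (2:ℝ) * q^2 ≤ (q:ℝ)^3 := by nlinarith
      nlinarith
    have s2 : ((2 * q + 1 : ℕ) : ℝ) ^ p ≤ ((q:ℝ) ^ (3:ℕ)) ^ p :=
      pow_le_pow_left₀ (by positivity) s1 p
    have s3 : ((q:ℝ) ^ (3:ℕ)) ^ p = (2:ℝ) ^ (K * (3 * p : ℕ)) := by
      rw [← pow_mul, hqK, ← Real.rpow_natCast ((2:ℝ) ^ K) (3 * p), ← Real.rpow_mul (by norm_num)]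
    have s4 : ((7:ℝ)/10) ≤ (2:ℝ) ^ (-(1:ℝ)/2) := by
      have hsq : Real.sqrt 2 ≤ 10/7 := by
        rw [Real.sqrt_le_iff]
        constructor <;> norm_num
      have h2pos : (0:ℝ) < Real.sqrt 2 := Real.sqrt_pos.mpr (by norm_num)
      have : (2:ℝ) ^ (-(1:ℝ)/2) = (Real.sqrt 2)⁻¹ := by
        rw [show -(1:ℝ)/2 = -(1/2) by ring, Real.rpow_neg (by norm_num),
          Real.sqrt_eq_rpow]
      rw [this]
      rw [le_inv_comm₀ (by norm_num) h2pos]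
      linarith
    have s5 : ((7:ℝ)/10) ^ d1 ≤ (2:ℝ) ^ ((-(1:ℝ)/2) * d1) := by
      calc ((7:ℝ)/10) ^ d1 ≤ ((2:ℝ) ^ (-(1:ℝ)/2)) ^ d1 := pow_le_pow_left₀ (by norm_num) s4 d1
        _ = (2:ℝ) ^ ((-(1:ℝ)/2) * d1) := by
          rw [← Real.rpow_natCast ((2:ℝ) ^ (-(1:ℝ)/2)) d1, ← Real.rpow_mul (by norm_num)]
    calc ((2 * q + 1 : ℕ) : ℝ) ^ p * (7/10) ^ d1
        ≤ (2:ℝ) ^ (K * (3 * p : ℕ)) * (2:ℝ) ^ ((-(1:ℝ)/2) * d1) := by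
          refine mul_le_mul (s2.trans_eq s3) s5 (by positivity) (by positivity)
      _ = (2:ℝ) ^ (K * (3 * p : ℕ) + (-(1:ℝ)/2) * d1) := (Real.rpow_add (by norm_num) _ _).symm
      _ ≤ (2:ℝ) ^ (-2 : ℝ) := by
          refine Real.rpow_le_rpow_of_exponent_le (by norm_num) ?_
          push_cast
          nlinarith [hd1, hpK, hK1, hpR]
      _ = 1/4 := by
          rw [show (-2:ℝ) = ((-2 : ℤ) : ℝ) by norm_num, Real.rpow_intCast]
          norm_num
  -- term 2
  have h2 : ((q * q : ℕ) : ℝ) * 2 * ((1:ℝ)/2) ^ d1 ≤ 1/4 := by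
    have t1 : ((q * q : ℕ) : ℝ) * 2 = (2:ℝ) ^ (2 * K + 1) := by
      have e3 : (2:ℝ) ^ (2*K+1) = (2:ℝ)^K * (2:ℝ)^K * 2 := by
        rw [show 2*K+1 = K + (K + 1) by ring, Real.rpow_add (by norm_num),
          Real.rpow_add (by norm_num), Real.rpow_one]
        ring
      push_cast
      rw [e3, ← hqK]
    have t2 : ((1:ℝ)/2) ^ d1 = (2:ℝ) ^ (-(d1:ℝ)) := by
      rw [← Real.rpow_natCast ((1:ℝ)/2) d1, show (1:ℝ)/2 = (2:ℝ) ^ (-1:ℝ) by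
        rw [Real.rpow_neg_one]; norm_num, ← Real.rpow_mul (by norm_num)]
      ring_nf
    calc ((q * q : ℕ) : ℝ) * 2 * ((1:ℝ)/2) ^ d1
        = (2:ℝ) ^ (2 * K + 1) * (2:ℝ) ^ (-(d1:ℝ)) := by rw [t1, t2]
      _ = (2:ℝ) ^ (2 * K + 1 + -(d1:ℝ)) := (Real.rpow_add (by norm_num) _ _).symm
      _ ≤ (2:ℝ) ^ (-2 : ℝ) := by
          refine Real.rpow_le_rpow_of_exponent_le (by norm_num) ?_
          nlinarith [hd1, hpK, hK1, hpR]
      _ = 1/4 := by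
          rw [show (-2:ℝ) = ((-2 : ℤ) : ℝ) by norm_num, Real.rpow_intCast]
          norm_num
  linarith

/-- the boolean pattern of the vectors -/
def gfun {q : ℕ} (d1 : ℕ) (ω : Fin d1 → Fin q → Bool) (b : Fin 2) (c : Fin q) (j : ℕ) : Bool :=
  if h : j < d1 then (ω ⟨j, h⟩ c == decide (b = 0))
  else if h2 : j - d1 < d1 ∧ d1 ≤ j then (ω ⟨j - d1, h2.1⟩ c == decide (b = 1))
  else false


end

end MVS

open Finset in
/-- For all integers `p, q ≥ 2` there exist `2q` pairwise distinct
`{0,1}`-vectors `v b c ∈ ℝ^{d₀}` (`b ∈ {1,2}`, `c ∈ [q]`), with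
`d₀ = ⌈100 · p · log₂ q⌉`, such that: (i) every coordinate of `v 0 c + v 1 c` is at
most `1`; and (ii) for every `1 ≤ p' ≤ p`, every `β : [q] → {1,2}` and every multiplicity
function `w : [q] → ℕ` with `Σ_c w c = p'`, the sup norm of `Σ_c w c • v (β c) c` is at
least `p'/2 + √(p'/200)`.  (This is a `(2, q, p)`-modified vector system.) -/
theorem modified_vector_system_exists (p q : ℕ) (hp : 2 ≤ p) (hq : 2 ≤ q) :
    ∃ v : Fin 2 → Fin q → Fin ⌈(100 * p : ℝ) * Real.logb 2 q⌉₊ → ℝ,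
      Function.Injective (fun bc : Fin 2 × Fin q => v bc.1 bc.2) ∧
      (∀ b c w, v b c w = 0 ∨ v b c w = 1) ∧
      (∀ c w, v 0 c w + v 1 c w ≤ 1) ∧
      (∀ p' : ℕ, 1 ≤ p' → p' ≤ p → ∀ β : Fin q → Fin 2, ∀ wt : Fin q → ℕ,
        (∑ c, wt c) = p' →
        (p' : ℝ) / 2 + Real.sqrt (p' / 200) ≤
          ‖(fun w => ∑ c, (wt c : ℝ) * v (β c) c w : _ → ℝ)‖) := by
  classical
  set D : ℕ := ⌈(100 * p : ℝ) * Real.logb 2 q⌉₊ with hD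
  set d1 : ℕ := D / 2 with hd1def
  set K : ℝ := Real.logb 2 q with hK
  have hqR : (2:ℝ) ≤ (q:ℝ) := by exact_mod_cast hq
  have hq0 : (0:ℝ) < q := by linarith
  have hK1 : 1 ≤ K := by
    rw [hK]
    calc (1:ℝ) = Real.logb 2 2 := (Real.logb_self_eq_one (by norm_num)).symm
      _ ≤ Real.logb 2 q := (Real.logb_le_logb (by norm_num) (by norm_num) hq0).mpr hqR
  have hpR : (2:ℝ) ≤ (p:ℝ) := by exact_mod_cast hp
  have hpK : (2:ℝ) ≤ (p:ℝ) * K := by nlinarith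
  have hDge : (100 * (p:ℝ)) * K ≤ (D:ℝ) := by
    rw [hD]
    exact_mod_cast Nat.le_ceil _
  have hDd1 : (D:ℝ) ≤ 2 * (d1:ℝ) + 1 := by
    have : D ≤ 2 * d1 + 1 := by omega
    exact_mod_cast this
  have h2d1D : 2 * d1 ≤ D := by omega
  have hd1K : 49 * (p:ℝ) * K ≤ (d1:ℝ) := by nlinarith
  have hd1pos : 0 < d1 := by
    by_contra h
    push_neg at h
    interval_cases d1
    · simp at hd1K; nlinarith
  have hd1D : d1 ≤ D := by omega
  obtain ⟨ω, hG1, hG2⟩ := MVS.exists_good (q := q) p d1 (MVS.numeric p q d1 hp hq hd1K)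
  refine ⟨fun b c w => if MVS.gfun d1 ω b c (w : ℕ) then 1 else 0, ?_, ?_, ?_, ?_⟩
  · -- injectivity
    rintro ⟨b, c⟩ ⟨b', c'⟩ h
    simp only [Prod.mk.injEq]
    have hg : ∀ j : Fin D, MVS.gfun d1 ω b c (j:ℕ) = MVS.gfun d1 ω b' c' (j:ℕ) := by
      intro j
      have hj := congrFun h j
      simp only at hj
      by_cases h1 : MVS.gfun d1 ω b c (j:ℕ) <;> by_cases h2 : MVS.gfun d1 ω b' c' (j:ℕ) <;>
        simp_all
    -- evaluate at row coordinates
    have hrow : ∀ i : Fin d1, (ω i c == decide (b = 0)) = (ω i c' == decide (b' = 0)) := by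
      intro i
      have hlt : (i:ℕ) < D := lt_of_lt_of_le i.isLt hd1D
      have := hg ⟨(i:ℕ), hlt⟩
      rw [MVS.gfun, MVS.gfun] at this
      simp only [dif_pos i.isLt] at this
      simpa using this
    have hcc : c = c' := by
      by_contra hcc
      obtain ⟨⟨ieq, hieq⟩, ⟨ine, hine⟩⟩ := hG2 c c' hcc
      by_cases hbb : b = b'
      · subst hbb
        have := hrow ine
        have hinj : ∀ x y t : Bool, (x == t) = (y == t) → x = y := by decide
        exact hine (hinj _ _ _ this)
      · have hdec : ∀ x y : Fin 2, x ≠ y → decide (x = 0) = !decide (y = 0) := by decide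
        have hbneq : decide (b = 0) = !decide (b' = 0) := hdec b b' hbb
        have := hrow ieq
        rw [hbneq, hieq] at this
        have : ∀ x t : Bool, (x == !t) ≠ (x == t) := by decide
        exact absurd (hrow ieq) (by rw [hbneq, hieq]; exact this _ _)
    subst hcc
    refine ⟨?_, rfl⟩
    by_contra hbb
    have hdec : ∀ x y : Fin 2, x ≠ y → decide (x = 0) = !decide (y = 0) := by decide
    have hbneq : decide (b = 0) = !decide (b' = 0) := hdec b b' hbb
    have i0 : Fin d1 := ⟨0, hd1pos⟩
    have := hrow ⟨0, hd1pos⟩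
    rw [hbneq] at this
    have hno : ∀ x t : Bool, (x == !t) ≠ (x == t) := by decide
    exact absurd this (hno _ _)
  · intro b c w
    by_cases h : MVS.gfun d1 ω b c (w : ℕ) <;> simp [h]
  · -- disjointness
    intro c w
    have key : ¬ (MVS.gfun d1 ω 0 c (w:ℕ) = true ∧ MVS.gfun d1 ω 1 c (w:ℕ) = true) := by
      rintro ⟨h0, h1⟩
      rw [MVS.gfun] at h0 h1
      by_cases hj : (w:ℕ) < d1
      · rw [dif_pos hj] at h0 h1
        revert h0 h1
        cases (ω ⟨(w:ℕ), hj⟩ c) <;> decide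
      · rw [dif_neg hj] at h0 h1
        by_cases hj2 : (w:ℕ) - d1 < d1 ∧ d1 ≤ (w:ℕ)
        · rw [dif_pos hj2] at h0 h1
          revert h0 h1
          cases (ω ⟨(w:ℕ) - d1, hj2.1⟩ c) <;> decide
        · rw [dif_neg hj2] at h0
          exact Bool.false_ne_true h0
    by_cases h0 : MVS.gfun d1 ω 0 c (w:ℕ) <;> by_cases h1 : MVS.gfun d1 ω 1 c (w:ℕ) <;>
      simp [h0, h1] at key ⊢
  · intro p' hp'1 hp'2 β wt hsum
    set lam : Fin q → ℤ := fun c => if β c = 0 then (wt c : ℤ) else -(wt c : ℤ) with hlam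
    have hlamc : ∀ c, lam c = if β c = 0 then (wt c : ℤ) else -(wt c : ℤ) := fun c => rfl
    have habs : ∀ c, |lam c| = (wt c : ℤ) := by
      intro c
      rw [hlamc]
      by_cases hb : β c = 0 <;> simp [hb]
    have hl1 : (∑ c, |lam c|) = (p' : ℤ) := by
      rw [Finset.sum_congr rfl fun c _ => habs c]
      rw [← Nat.cast_sum, hsum]
    obtain ⟨i, hi⟩ := hG1 lam (by rw [hl1]; exact_mod_cast hp'1)
      (by rw [hl1]; exact_mod_cast hp'2)
    rw [hl1] at hi
    have hi' : (p' : ℝ)/50 ≤ (MVS.St' (fun c => (lam c : ℝ)) univ (ω i))^2 := by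
      push_cast at hi
      exact hi
    set S : ℝ := MVS.St' (fun c => (lam c : ℝ)) univ (ω i) with hSdef
    have hi_lt : (i:ℕ) < D := lt_of_lt_of_le i.isLt hd1D
    have hi2_lt : d1 + (i:ℕ) < D := by have := i.isLt; omega
    have hterm0 : ∀ c, (wt c : ℝ) * (if MVS.gfun d1 ω (β c) c (i:ℕ) then (1:ℝ) else 0)
        = ((wt c:ℝ) + (lam c:ℝ) * MVS.e' (ω i c))/2 := by
      intro c
      have hg0 : MVS.gfun d1 ω (β c) c (i:ℕ) = (ω i c == decide (β c = 0)) := by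
        rw [MVS.gfun, dif_pos i.isLt]
      rw [hg0, hlamc]
      by_cases hb : β c = 0 <;> cases hw : ω i c <;> simp [hb, hw, MVS.e'] <;> push_cast <;> ring
    have hterm1 : ∀ c, (wt c : ℝ) * (if MVS.gfun d1 ω (β c) c (d1 + (i:ℕ)) then (1:ℝ) else 0)
        = ((wt c:ℝ) - (lam c:ℝ) * MVS.e' (ω i c))/2 := by
      intro c
      have hcond : ¬ (d1 + (i:ℕ) < d1) := by omega
      have hcond2 : d1 + (i:ℕ) - d1 < d1 ∧ d1 ≤ d1 + (i:ℕ) := by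
        constructor
        · have := i.isLt; omega
        · omega
      have hidx : (⟨d1 + (i:ℕ) - d1, hcond2.1⟩ : Fin d1) = i := by
        apply Fin.ext
        simp
      have hg1 : MVS.gfun d1 ω (β c) c (d1 + (i:ℕ)) = (ω i c == decide (β c = 1)) := by
        rw [MVS.gfun, dif_neg hcond, dif_pos hcond2, hidx]
      have hb1 : (β c = 1) ↔ ¬ (β c = 0) := by
        constructor
        · intro h h0; rw [h0] at h; exact absurd h (by decide)
        · intro h
          have : ∀ x : Fin 2, x ≠ 0 → x = 1 := by decide
          exact this _ h
      rw [hg1, hlamc]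
      by_cases hb : β c = 0 <;> cases hw : ω i c <;>
        simp [hb, hw, MVS.e', hb1] <;> push_cast <;> ring
    have hwtsum : (∑ c, (wt c : ℝ)) = (p' : ℝ) := by
      rw [← Nat.cast_sum, hsum]
    have hval0 : (∑ c, (wt c : ℝ) * (if MVS.gfun d1 ω (β c) c (i:ℕ) then (1:ℝ) else 0))
        = ((p':ℝ) + S)/2 := by
      rw [Finset.sum_congr rfl (fun c _ => hterm0 c), ← Finset.sum_div,
        Finset.sum_add_distrib, hwtsum, hSdef, MVS.St']
    have hval1 : (∑ c, (wt c : ℝ) * (if MVS.gfun d1 ω (β c) c (d1 + (i:ℕ)) then (1:ℝ) else 0))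
        = ((p':ℝ) - S)/2 := by
      rw [Finset.sum_congr rfl (fun c _ => hterm1 c), ← Finset.sum_div,
        Finset.sum_sub_distrib, hwtsum, hSdef, MVS.St']
    have hsqrt : Real.sqrt ((p':ℝ)/200) = Real.sqrt ((p':ℝ)/50) / 2 := by
      rw [show (p':ℝ)/200 = ((p':ℝ)/50)/4 by ring, Real.sqrt_div (by positivity) 4,
        show Real.sqrt 4 = 2 by
          rw [show (4:ℝ) = 2^2 by norm_num, Real.sqrt_sq (by norm_num)]]
    have habsS : Real.sqrt ((p':ℝ)/50) ≤ |S| := by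
      have h2 := Real.sqrt_le_sqrt hi'
      rwa [Real.sqrt_sq_eq_abs] at h2
    set f : Fin D → ℝ :=
      fun w => ∑ c, (wt c : ℝ) * (if MVS.gfun d1 ω (β c) c (w:ℕ) then (1:ℝ) else 0) with hf
    have hgoal : (p' : ℝ)/2 + Real.sqrt ((p':ℝ)/200) ≤ ‖f‖ := by
      rcases le_or_gt 0 S with hS0 | hS0
      · have hfj : f ⟨(i:ℕ), hi_lt⟩ = ((p':ℝ) + S)/2 := hval0
        calc (p' : ℝ)/2 + Real.sqrt ((p':ℝ)/200) ≤ ((p':ℝ) + S)/2 := by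
              rw [hsqrt]
              rw [abs_of_nonneg hS0] at habsS
              linarith
          _ ≤ |((p':ℝ) + S)/2| := le_abs_self _
          _ = ‖f ⟨(i:ℕ), hi_lt⟩‖ := by rw [hfj, Real.norm_eq_abs]
          _ ≤ ‖f‖ := norm_le_pi_norm f _
      · have hfj : f ⟨d1 + (i:ℕ), hi2_lt⟩ = ((p':ℝ) - S)/2 := hval1
        calc (p' : ℝ)/2 + Real.sqrt ((p':ℝ)/200) ≤ ((p':ℝ) - S)/2 := by
              rw [hsqrt]
              rw [abs_of_neg hS0] at habsS
              linarith
          _ ≤ |((p':ℝ) - S)/2| := le_abs_self _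
          _ = ‖f ⟨d1 + (i:ℕ), hi2_lt⟩‖ := by rw [hfj, Real.norm_eq_abs]
          _ ≤ ‖f‖ := norm_le_pi_norm f _
    exact hgoal
end

section
/- Define real functions f_0(x) = e^x and f_{i+1}(x) = exp(f_i(x) − 1) for each integer i ≥ 0. Then for every integer k ≥ 0, every integer p ≥ 1, and every real x > 0, bell_k(p) · x^p ≤ p! · (f_k(x) − 1). -/
/-!
`f_k` is the exponential generating function of `bell_k`, and the claim compares one coefficient
with the whole series. Instead of composing power series we work with truncations. Splitting off
the top-level block that contains a distinguished point gives
`bell_{k+1}(p+1) ≤ ∑ j, C(p,j) bell_k(j+1) bell_{k+1}(p-j)`, the coefficientwise form of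
`f_{k+1}' = f_k' · f_{k+1}`. With the integration step (if the truncated series of `a'` lies
below `g'` on `[0, ∞)` and `a 0 ≤ g 0`, then that of `a` lies below `g`), an induction on `k`
and, inside it, on the truncation order shows that every truncated series of `bell_k` lies below
`f_k` on `[0, ∞)`. Keeping only the terms of degree `0` and `p` gives the inequality.
-/
/-- `Q` is a refinement of `P`: every part of `Q` is contained in some part of `P`. -/
def FPRefines {p : ℕ} (Q P : Finpartition (Finset.univ : Finset (Fin p))) : Prop :=
  ∀ a ∈ Q.parts, ∃ b ∈ P.parts, a ⊆ b

/-- `f = (T_1, …, T_k)` is a `k`-level (hierarchical) partition of `[p]`: each `T_{i+1}`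
is a refinement of `T_i`. -/
def IsKLevel {p : ℕ} (k : ℕ)
    (f : Fin k → Finpartition (Finset.univ : Finset (Fin p))) : Prop :=
  ∀ (i : ℕ) (h : i + 1 < k), FPRefines (f ⟨i + 1, h⟩) (f ⟨i, Nat.lt_of_succ_lt h⟩)

/-- The order-`k` Bell number `bell_k(p)`: the number of `k`-level hierarchical partitions
of `[p]` (so `bell_0(p) = 1`). -/
noncomputable def bellk (k p : ℕ) : ℕ :=
  Nat.card {f : Fin k → Finpartition (Finset.univ : Finset (Fin p)) // IsKLevel k f}

/-- The real functions `f_0(x) = e^x`, `f_{i+1}(x) = exp(f_i(x) − 1)`. -/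
noncomputable def fIter : ℕ → ℝ → ℝ
  | 0, x => Real.exp x
  | i + 1, x => Real.exp (fIter i x - 1)

open Finset
open scoped Nat

lemma Setoid.eq_of_comap_eq_of_not_rel {α β γ : Type*} {r s : Setoid γ} {f : α → γ}
    {g : β → γ} (hfg : ∀ z, (∃ a, f a = z) ∨ ∃ b, g b = z)
    (hr : ∀ a b, ¬ r (f a) (g b)) (hs : ∀ a b, ¬ s (f a) (g b))
    (hf : r.comap f = s.comap f) (hg : r.comap g = s.comap g) :
    r = s := by
  ext z w
  rcases hfg z with ⟨a, rfl⟩ | ⟨b, rfl⟩ <;> rcases hfg w with ⟨a', rfl⟩ | ⟨b', rfl⟩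
  · exact Setoid.ext_iff.1 hf a a'
  · exact iff_of_false (hr a b') (hs a b')
  · exact iff_of_false (fun h => hr a' b (r.symm' h)) (fun h => hs a' b (s.symm' h))
  · exact Setoid.ext_iff.1 hg b b'

lemma Finset.exists_optionMap_val_or_exists_some_val {α : Type*} [Fintype α] [DecidableEq α]
    (S : Finset α) (z : Option α) :
    (∃ a : Option S, a.map (↑) = z) ∨ ∃ b : ↥Sᶜ, some (b : α) = z := by
  rcases z with _ | a
  · exact Or.inl ⟨none, rfl⟩
  · by_cases ha : a ∈ S
    · exact Or.inl ⟨some ⟨a, ha⟩, rfl⟩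
    · exact Or.inr ⟨⟨a, mem_compl.2 ha⟩, rfl⟩

namespace Finpartition

variable {α : Type*} [Fintype α] [DecidableEq α]

lemma ker_part_le_ker_part_iff {P Q : Finpartition (univ : Finset α)} :
    Setoid.ker P.part ≤ Setoid.ker Q.part ↔ P ≤ Q := by
  simp only [Setoid.le_def, Setoid.ker_def]
  constructor
  · intro h t ht
    obtain ⟨a, ha⟩ := P.nonempty_of_mem_parts ht
    refine ⟨Q.part a, Q.part_mem.2 (mem_univ a), fun b hb => ?_⟩
    rw [Q.mem_part_iff_part_eq_part (mem_univ b) (mem_univ a)]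
    exact h ((P.part_eq_of_mem ht hb).trans (P.part_eq_of_mem ht ha).symm)
  · intro h x y hxy
    obtain ⟨c, hc, hxc⟩ := h (P.part_mem.2 (mem_univ x))
    have hx : x ∈ P.part x := P.mem_part_self.2 (mem_univ x)
    have hy : y ∈ P.part x := hxy ▸ P.mem_part_self.2 (mem_univ y)
    rw [Q.part_eq_of_mem hc (hxc hx), Q.part_eq_of_mem hc (hxc hy)]

lemma ker_part_injective :
    Function.Injective fun P : Finpartition (univ : Finset α) => Setoid.ker P.part :=
  fun _ _ h => le_antisymm (ker_part_le_ker_part_iff.1 h.le) (ker_part_le_ker_part_iff.1 h.ge)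

lemma ker_part_ofSetoid (r : Setoid α) [DecidableRel r] : Setoid.ker (ofSetoid r).part = r := by
  ext x y
  rw [Setoid.ker_def, ← (ofSetoid r).mem_part_iff_part_eq_part (mem_univ _) (mem_univ _),
    mem_part_ofSetoid_iff_rel, r.comm']

noncomputable def orderIsoSetoid : Finpartition (univ : Finset α) ≃o Setoid α where
  toFun P := Setoid.ker P.part
  invFun r := @ofSetoid _ _ _ r (Classical.decRel _)
  right_inv r := @ker_part_ofSetoid _ _ _ r (Classical.decRel _)
  left_inv _ := ker_part_injective (@ker_part_ofSetoid _ _ _ _ (Classical.decRel _))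
  map_rel_iff' := ker_part_le_ker_part_iff

end Finpartition

lemma isKLevel_iff_antitone {k p : ℕ} (f : Fin k → Finpartition (univ : Finset (Fin p))) :
    IsKLevel k f ↔ Antitone f := by
  cases k with
  | zero => exact iff_of_true (fun i h => absurd h (by omega)) fun i => i.elim0
  | succ n =>
    rw [Fin.antitone_iff_succ_le]
    exact ⟨fun h i => h i (by omega), fun h i hi => h ⟨i, by omega⟩⟩

/-- `k`-level partitions of `α`, each level recorded as an equivalence relation, so that
restricting to a subset is `Setoid.comap`. -/
abbrev LevelPartition (k : ℕ) (α : Type*) : Type _ :=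
  {r : Fin k → Setoid α // Antitone r}

namespace LevelPartition

variable {k : ℕ} {α β : Type*}

instance [Finite α] : Finite (LevelPartition k α) :=
  haveI : Finite (Setoid α) := Finite.of_injective _ fun _ _ => Setoid.eq_iff_rel_eq.2
  Subtype.finite

def comap (f : α → β) (r : LevelPartition k β) : LevelPartition k α :=
  ⟨fun i => (r.1 i).comap f, fun _ _ hij _ _ h => r.2 hij h⟩

def tail (r : LevelPartition (k + 1) α) : LevelPartition k α :=
  ⟨fun i => r.1 i.succ, r.2.comp_monotone Fin.strictMono_succ.monotone⟩

def congr (e : α ≃ β) : LevelPartition k α ≃ LevelPartition k β where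
  toFun := comap e.symm
  invFun := comap e
  left_inv r := show r.comap (e.symm ∘ e) = r by rw [e.symm_comp_self]; rfl
  right_inv r := show r.comap (e ∘ e.symm) = r by rw [e.self_comp_symm]; rfl

end LevelPartition

lemma bellk_eq_card_levelPartition (k p : ℕ) :
    bellk k p = Nat.card (LevelPartition k (Fin p)) := by
  let e := Finpartition.orderIsoSetoid (α := Fin p)
  refine Nat.card_congr (Equiv.subtypeEquiv (Equiv.arrowCongr (Equiv.refl _) e.toEquiv) ?_)
  intro f
  rw [isKLevel_iff_antitone]
  simp only [Antitone, Equiv.arrowCongr_apply, Function.comp_apply,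
    OrderIso.coe_toEquiv, e.le_iff_le]
  rfl

lemma card_levelPartition (k : ℕ) (α : Type*) [Fintype α] :
    Nat.card (LevelPartition k α) = bellk k (Fintype.card α) := by
  rw [bellk_eq_card_levelPartition]
  exact Nat.card_congr (LevelPartition.congr (Fintype.equivFin α))

namespace LevelPartition

variable {α : Type*} [Fintype α] {k : ℕ}

noncomputable def block (r : LevelPartition (k + 1) (Option α)) : Finset α := by
  classical exact {a | r.1 0 none (some a)}

lemma mem_block {r : LevelPartition (k + 1) (Option α)} {a : α} :
    a ∈ r.block ↔ r.1 0 none (some a) := by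
  unfold block; simp

lemma rel_zero_none_of_block_eq {r : LevelPartition (k + 1) (Option α)} {S : Finset α}
    (hS : r.block = S) (a : Option S) : r.1 0 none (a.map (↑)) := by
  rcases a with _ | ⟨a, ha⟩
  · exact Setoid.refl' _ _
  · exact mem_block.1 (hS ▸ ha)

variable [DecidableEq α]

lemma not_rel_of_block_eq {r : LevelPartition (k + 1) (Option α)} {S : Finset α}
    (hS : r.block = S) (i : Fin (k + 1)) (a : Option S) (b : ↥Sᶜ) :
    ¬ r.1 i (a.map (↑)) (some (b : α)) := fun h => by
  have h0 : r.1 0 none (some (b : α)) :=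
    (r.1 0).trans' (rel_zero_none_of_block_eq hS a) (r.2 (Fin.zero_le i) h)
  have hb : (b : α) ∈ r.block := mem_block.2 h0
  rw [hS] at hb
  exact mem_compl.1 b.2 hb

def restrictPair (S : Finset α) (r : LevelPartition (k + 1) (Option α)) :
    LevelPartition k (Option S) × LevelPartition (k + 1) ↥Sᶜ :=
  (r.tail.comap (Option.map (↑)), r.comap (some ∘ (↑)))

/-- On the top-level block `S` of `none`, the top level is trivial and only the `k` lower levels
carry information; on its complement all `k + 1` levels do. -/
noncomputable def splitBlock (r : LevelPartition (k + 1) (Option α)) :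
    Σ S : Finset α, LevelPartition k (Option S) × LevelPartition (k + 1) ↥Sᶜ :=
  ⟨r.block, restrictPair r.block r⟩

lemma eq_of_restrictPair_eq {r r' : LevelPartition (k + 1) (Option α)} {S : Finset α}
    (hr : r.block = S) (hr' : r'.block = S) (h : restrictPair S r = restrictPair S r') :
    r = r' := by
  obtain ⟨htail, hrest⟩ := Prod.ext_iff.1 h
  refine Subtype.ext <| funext fun i => Setoid.eq_of_comap_eq_of_not_rel
    S.exists_optionMap_val_or_exists_some_val (not_rel_of_block_eq hr i)
    (not_rel_of_block_eq hr' i) ?_ (congrFun (congrArg Subtype.val hrest) i)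
  cases i using Fin.cases with
  | zero =>
    ext a b
    exact iff_of_true
      ((r.1 0).trans' ((r.1 0).symm' (rel_zero_none_of_block_eq hr a))
        (rel_zero_none_of_block_eq hr b))
      ((r'.1 0).trans' ((r'.1 0).symm' (rel_zero_none_of_block_eq hr' a))
        (rel_zero_none_of_block_eq hr' b))
  | succ j => exact congrFun (congrArg Subtype.val htail) j

lemma splitBlock_injective : Function.Injective (splitBlock (k := k) (α := α)) := by
  intro r r' h
  obtain ⟨hS, hpair⟩ := Sigma.mk.inj_iff.1 h
  rw [← hS] at hpair
  exact eq_of_restrictPair_eq rfl hS.symm (eq_of_heq hpair)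

end LevelPartition

lemma card_levelPartition_option_le {α : Type*} [Fintype α] [DecidableEq α] (k : ℕ) :
    Nat.card (LevelPartition (k + 1) (Option α)) ≤
      ∑ S : Finset α, Nat.card (LevelPartition k (Option S)) *
        Nat.card (LevelPartition (k + 1) ↥Sᶜ) := by
  refine (Nat.card_le_card_of_injective _ LevelPartition.splitBlock_injective).trans_eq ?_
  rw [Nat.card_sigma]
  simp only [Nat.card_prod]

theorem bellk_succ_succ_le (k p : ℕ) :
    bellk (k + 1) (p + 1) ≤
      ∑ j ∈ range (p + 1), p.choose j * bellk k (j + 1) * bellk (k + 1) (p - j) := by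
  have h := card_levelPartition_option_le (α := Fin p) k
  simp only [card_levelPartition, Fintype.card_option, Fintype.card_fin, Fintype.card_coe,
    card_compl] at h
  rw [← powerset_univ, sum_powerset_apply_card
    (fun j => bellk k (j + 1) * bellk (k + 1) (p - j))] at h
  simpa [mul_assoc] using h

lemma bellk_zero_left (p : ℕ) : bellk 0 p = 1 := by
  rw [bellk_eq_card_levelPartition, Nat.card_eq_one_iff_unique]
  exact ⟨⟨fun _ _ => Subtype.ext (funext fun i => i.elim0)⟩,
    ⟨⟨Fin.elim0, fun i => i.elim0⟩⟩⟩

lemma bellk_zero_right (k : ℕ) : bellk k 0 = 1 := by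
  rw [bellk_eq_card_levelPartition, Nat.card_eq_one_iff_unique]
  refine ⟨⟨fun _ _ => Subtype.ext (funext fun _ => Setoid.ext fun x => x.elim0)⟩,
    ⟨⟨fun _ => ⊤, antitone_const⟩⟩⟩

noncomputable def truncatedEGF (a : ℕ → ℝ) (n : ℕ) (x : ℝ) : ℝ :=
  ∑ q ∈ range n, a q * x ^ q / q !

section truncatedEGF

variable {a b c : ℕ → ℝ} {n : ℕ} {x : ℝ}

lemma truncatedEGF_nonneg (ha : ∀ q, 0 ≤ a q) (hx : 0 ≤ x) : 0 ≤ truncatedEGF a n x :=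
  sum_nonneg fun q _ => by have := ha q; positivity

lemma truncatedEGF_succ_zero (a : ℕ → ℝ) (n : ℕ) : truncatedEGF a (n + 1) 0 = a 0 := by
  simp [truncatedEGF, sum_range_succ']

lemma hasDerivAt_truncatedEGF (a : ℕ → ℝ) (n : ℕ) (x : ℝ) :
    HasDerivAt (truncatedEGF a (n + 1)) (truncatedEGF (fun q => a (q + 1)) n x) x := by
  have h : HasDerivAt (truncatedEGF a (n + 1))
      (∑ q ∈ range (n + 1), a q * (q * x ^ (q - 1)) / q !) x := by
    unfold truncatedEGF
    exact HasDerivAt.fun_sum fun q _ => ((hasDerivAt_pow q x).const_mul _).div_const _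
  convert h using 1
  rw [sum_range_succ']
  simp only [truncatedEGF, CharP.cast_eq_zero, zero_mul, mul_zero, zero_div, add_zero]
  refine sum_congr rfl fun q _ => ?_
  rw [Nat.factorial_succ, Nat.add_sub_cancel]
  push_cast
  field_simp

lemma truncatedEGF_le_of_hasDerivAt {g g' : ℝ → ℝ} (hg : ∀ x, HasDerivAt g (g' x) x)
    (h0 : a 0 ≤ g 0) (h' : ∀ x, 0 ≤ x → truncatedEGF (fun q => a (q + 1)) n x ≤ g' x)
    (hx : 0 ≤ x) : truncatedEGF a (n + 1) x ≤ g x := by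
  have hderiv : ∀ y, HasDerivAt (fun y => g y - truncatedEGF a (n + 1) y)
      (g' y - truncatedEGF (fun q => a (q + 1)) n y) y :=
    fun y => (hg y).sub (hasDerivAt_truncatedEGF a n y)
  have hmono : MonotoneOn (fun y => g y - truncatedEGF a (n + 1) y) (Set.Ici 0) :=
    monotoneOn_of_hasDerivWithinAt_nonneg (convex_Ici 0)
      (fun y _ => (hderiv y).continuousAt.continuousWithinAt)
      (fun y _ => (hderiv y).hasDerivWithinAt)
      (fun y hy => sub_nonneg.2 (h' y (interior_subset hy)))
  have := hmono Set.self_mem_Ici hx hx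
  simp only [truncatedEGF_succ_zero] at this
  linarith

lemma choose_mul_div_factorial {q j : ℕ} (hjq : j ≤ q) (u v x : ℝ) :
    q.choose j * u * v * x ^ q / q ! = u * x ^ j / j ! * (v * x ^ (q - j) / (q - j)!) := by
  rw [Nat.cast_choose ℝ hjq, ← pow_mul_pow_sub x hjq]
  field_simp

lemma truncatedEGF_le_mul (ha : ∀ q, 0 ≤ a q) (hb : ∀ q, 0 ≤ b q)
    (hc : ∀ q, c q ≤ ∑ j ∈ range (q + 1), q.choose j * a j * b (q - j)) (hx : 0 ≤ x) :
    truncatedEGF c n x ≤ truncatedEGF a n x * truncatedEGF b n x := by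
  set u := fun j => a j * x ^ j / (j !)
  set v := fun i => b i * x ^ i / (i !)
  have hu : ∀ j, 0 ≤ u j := fun j => by have := ha j; positivity
  have hv : ∀ i, 0 ≤ v i := fun i => by have := hb i; positivity
  calc truncatedEGF c n x
      ≤ ∑ q ∈ range n, ∑ j ∈ range (q + 1), u j * v (q - j) := by
        refine sum_le_sum fun q _ => ?_
        calc c q * x ^ q / q !
            ≤ (∑ j ∈ range (q + 1), q.choose j * a j * b (q - j)) * x ^ q / q ! := by
              gcongr; exact hc q
          _ = _ := by
              rw [sum_mul, sum_div]
              exact sum_congr rfl fun j hj =>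
                choose_mul_div_factorial (Nat.lt_succ_iff.1 (mem_range.1 hj)) _ _ _
    _ = ∑ j ∈ range n, ∑ i ∈ range (n - j), u j * v i :=
        sum_range_diag_flip n fun j i => u j * v i
    _ ≤ ∑ j ∈ range n, ∑ i ∈ range n, u j * v i :=
        sum_le_sum fun j _ => sum_le_sum_of_subset_of_nonneg
          (range_subset_range.2 (Nat.sub_le n j)) fun i _ _ => mul_nonneg (hu j) (hv i)
    _ = truncatedEGF a n x * truncatedEGF b n x := by
        rw [truncatedEGF, truncatedEGF, sum_mul_sum]

end truncatedEGF

noncomputable def fIterDeriv : ℕ → ℝ → ℝ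
  | 0, x => Real.exp x
  | i + 1, x => fIter (i + 1) x * fIterDeriv i x

lemma hasDerivAt_fIter (k : ℕ) (x : ℝ) : HasDerivAt (fIter k) (fIterDeriv k x) x := by
  induction k generalizing x with
  | zero => exact Real.hasDerivAt_exp x
  | succ k ih => exact ((ih x).sub_const 1).exp

lemma fIter_zero_right (k : ℕ) : fIter k 0 = 1 := by
  induction k with
  | zero => exact Real.exp_zero
  | succ k ih => simp [fIter, ih]

lemma fIterDeriv_pos (k : ℕ) (x : ℝ) : 0 < fIterDeriv k x := by
  induction k with
  | zero => exact Real.exp_pos x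
  | succ k ih => exact mul_pos (Real.exp_pos _) ih

theorem truncatedEGF_bellk_succ_le_fIterDeriv (k n : ℕ) {x : ℝ} (hx : 0 ≤ x) :
    truncatedEGF (fun q => (bellk k (q + 1) : ℝ)) n x ≤ fIterDeriv k x := by
  induction k generalizing n x with
  | zero =>
    simpa [truncatedEGF, bellk_zero_left, fIterDeriv] using Real.sum_le_exp_of_nonneg hx n
  | succ k ihk =>
    induction n generalizing x with
    | zero => simpa [truncatedEGF] using (fIterDeriv_pos _ x).le
    | succ n ihn =>
      have hf : truncatedEGF (fun q => (bellk (k + 1) q : ℝ)) (n + 1) x ≤ fIter (k + 1) x :=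
        truncatedEGF_le_of_hasDerivAt (hasDerivAt_fIter (k + 1))
          (by simp [bellk_zero_right, fIter_zero_right]) (fun y hy => ihn hy) hx
      calc truncatedEGF (fun q => (bellk (k + 1) (q + 1) : ℝ)) (n + 1) x
          ≤ truncatedEGF (fun q => (bellk k (q + 1) : ℝ)) (n + 1) x *
              truncatedEGF (fun q => (bellk (k + 1) q : ℝ)) (n + 1) x :=
            truncatedEGF_le_mul (fun _ => Nat.cast_nonneg _) (fun _ => Nat.cast_nonneg _)
              (fun q => by exact_mod_cast bellk_succ_succ_le k q) hx
        _ ≤ fIterDeriv k x * fIter (k + 1) x :=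
            mul_le_mul (ihk (n + 1) hx) hf (truncatedEGF_nonneg (fun _ => Nat.cast_nonneg _) hx)
              (fIterDeriv_pos k x).le
        _ = fIterDeriv (k + 1) x := mul_comm _ _

theorem truncatedEGF_bellk_le_fIter (k n : ℕ) {x : ℝ} (hx : 0 ≤ x) :
    truncatedEGF (fun q => (bellk k q : ℝ)) (n + 1) x ≤ fIter k x :=
  truncatedEGF_le_of_hasDerivAt (hasDerivAt_fIter k)
    (by simp [bellk_zero_right, fIter_zero_right])
    (fun _ hy => truncatedEGF_bellk_succ_le_fIterDeriv k n hy) hx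

/-- For every `k ≥ 0`, `p ≥ 1` and real `x > 0`,
`bell_k(p) · x^p ≤ p! · (f_k(x) − 1)`. -/
theorem bellk_le_fIter (k p : ℕ) (hp : 1 ≤ p) (x : ℝ) (hx : 0 < x) :
    (bellk k p : ℝ) * x ^ p ≤ (p.factorial : ℝ) * (fIter k x - 1) := by
  have hterms : 1 + (bellk k p : ℝ) * x ^ p / p ! ≤
      truncatedEGF (fun q => (bellk k q : ℝ)) (p + 1) x :=
    calc 1 + (bellk k p : ℝ) * x ^ p / p !
        = ∑ q ∈ {0, p}, (bellk k q : ℝ) * x ^ q / q ! := by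
          rw [sum_pair (by omega)]; simp [bellk_zero_right]
      _ ≤ _ := sum_le_sum_of_subset_of_nonneg (by intro q; simp; omega)
          fun q _ _ => by positivity
  have := (truncatedEGF_bellk_le_fIter k p hx.le)
  exact (div_le_iff₀' (by positivity)).1 (by linarith)
end

section
/- Define real functions f_0(x) = e^x and f_{i+1}(x) = exp(f_i(x) − 1) for each integer i ≥ 0. Let M ≥ 1 be an integer and set x = log_e(1 + 1/M). Then for every integer i with 0 ≤ i < M, f_i(x) ≤ 1 + 1/(M − i). -/
/-! Since `exp t ≤ 1 / (1 - t)` for `0 ≤ t < 1`, a bound `f_i(x) ≤ 1 + 1/a` with `a > 1` propagates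
to `f_{i+1}(x) = exp(f_i(x) - 1) ≤ exp(1/a) ≤ a / (a - 1) = 1 + 1/(a - 1)`. Starting from
`f_0(x) = 1 + 1/M`, each step lowers the denominator by one. -/

lemma Real.exp_one_div_le_one_add_one_div_sub_one {a : ℝ} (ha : 1 < a) :
    Real.exp (1 / a) ≤ 1 + 1 / (a - 1) := calc
  Real.exp (1 / a) ≤ 1 / (1 - 1 / a) :=
    Real.exp_bound_div_one_sub_of_interval (by positivity) ((div_lt_one (by linarith)).2 ha)
  _ = 1 + 1 / (a - 1) := by
    have : a - 1 ≠ 0 := by linarith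
    field_simp
    ring

lemma fIter_succ_le_of_le {i : ℕ} {x a : ℝ} (ha : 1 < a) (h : fIter i x ≤ 1 + 1 / a) :
    fIter (i + 1) x ≤ 1 + 1 / (a - 1) := calc
  fIter (i + 1) x = Real.exp (fIter i x - 1) := rfl
  _ ≤ Real.exp (1 / a) := Real.exp_le_exp.2 (by linarith)
  _ ≤ 1 + 1 / (a - 1) := Real.exp_one_div_le_one_add_one_div_sub_one ha

theorem fIter_le_general (M : ℕ) (i : ℕ) (hi : i < M) :
    fIter i (Real.log (1 + 1 / M)) ≤ 1 + 1 / ((M : ℝ) - i) := by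
  induction i with
  | zero =>
    have hpos : (0 : ℝ) < 1 + 1 / M := by positivity
    simp only [fIter, Nat.cast_zero, sub_zero, Real.exp_log hpos, le_refl]
  | succ i ih =>
    have hMi : 1 < (M : ℝ) - i := by
      have : (i : ℝ) + 1 < M := by exact_mod_cast hi
      linarith
    calc fIter (i + 1) (Real.log (1 + 1 / M)) ≤ 1 + 1 / ((M : ℝ) - i - 1) :=
          fIter_succ_le_of_le hMi (ih (by omega))
      _ = 1 + 1 / ((M : ℝ) - (i + 1 : ℕ)) := by push_cast; ring

/-- Let `M ≥ 1` be an integer and `x = log(1 + 1/M)`. Then for every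
`0 ≤ i < M`, `f_i(x) ≤ 1 + 1/(M − i)`. -/
theorem fIter_le (M : ℕ) (hM : 1 ≤ M) (i : ℕ) (hi : i < M) :
    fIter i (Real.log (1 + 1 / M)) ≤ 1 + 1 / ((M : ℝ) - i) :=
  fIter_le_general M i hi
end

section
/- Let k ≥ 2 be an integer, and define the sequence of positive integers y_1, y_2, … by y_1 = 1 and, for j ≥ 1, y_{j+1} = min( k², ⌈ y_j + √(y_j / 100) ⌉ ). Then y_j ≥ j²/900 for every integer j with 1 ≤ j ≤ k. -/
/-- Let `k ≥ 2` and define `y_1 = 1`,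
`y_{j+1} = min(k², ⌈y_j + √(y_j/100)⌉)` for `j ≥ 1`.
Then `y_j ≥ j²/900` for all `1 ≤ j ≤ k`. -/
theorem recurrence_growth (k : ℕ) (hk : 2 ≤ k) (y : ℕ → ℕ)
    (hy1 : y 1 = 1)
    (hrec : ∀ j : ℕ, 1 ≤ j →
      y (j + 1) = min (k ^ 2) ⌈(y j : ℝ) + Real.sqrt ((y j : ℝ) / 100)⌉₊) :
    ∀ j : ℕ, 1 ≤ j → j ≤ k → ((j : ℝ) ^ 2) / 900 ≤ (y j : ℝ) := by
  intro j
  induction j with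
  | zero => intro h; omega
  | succ n ih =>
    intro _ hle
    by_cases hn : n = 0
    · subst hn; simp [hy1]; norm_num
    · have hn1 : 1 ≤ n := by omega
      have hyn := ih hn1 (by omega)
      rw [hrec n hn1]
      rcases le_total (k ^ 2) ⌈(y n : ℝ) + Real.sqrt ((y n : ℝ) / 100)⌉₊ with h | h
      · rw [min_eq_left h]
        have hkc : ((n : ℝ) + 1) ≤ (k : ℝ) := by exact_mod_cast hle
        push_cast
        nlinarith [hkc]
      · rw [min_eq_right h]
        have hceil : (y n : ℝ) + Real.sqrt ((y n : ℝ) / 100) ≤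
            (⌈(y n : ℝ) + Real.sqrt ((y n : ℝ) / 100)⌉₊ : ℝ) := Nat.le_ceil _
        have hsq : (n : ℝ) / 300 ≤ Real.sqrt ((y n : ℝ) / 100) := by
          rw [show (n : ℝ) / 300 = Real.sqrt (((n : ℝ) / 300) ^ 2) from
            (Real.sqrt_sq (by positivity)).symm]
          apply Real.sqrt_le_sqrt
          nlinarith
        have hnr : (1 : ℝ) ≤ (n : ℝ) := by exact_mod_cast hn1
        push_cast
        nlinarith
end
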